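/- arXiv:1802.04355 — 12 statements merged into one kernel-verified Lean document; each statement's English description precedes it below -/
import Mathlib

section
/- Let A be a real m×m matrix and U a real n×n matrix such that no complex eigenvalue λ of A has the property that −λ is a complex eigenvalue of U. Then for every real m×n matrix B there exists a unique real m×n matrix X satisfying the Sylvester equation A X + X U + B = 0; equivalently, the linear map X ↦ A X + X U on m×n real matrices is bijective. -/
open Matrix Polynomial

lemma my_eval_charpoly {k : ℕ} (M : Matrix (Fin k) (Fin k) ℂ) (r : ℂ) :
    M.charpoly.eval r = (r • (1 : Matrix (Fin k) (Fin k) ℂ) - M).det := by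
  rw [Matrix.charpoly, ← Polynomial.coe_evalRingHom, RingHom.map_det]
  congr 1
  ext i j
  by_cases hij : i = j <;>
    simp [charmatrix, Matrix.scalar, Matrix.one_apply, hij, Matrix.diagonal]

lemma my_key {m n : ℕ} (A : Matrix (Fin m) (Fin m) ℝ) (U : Matrix (Fin n) (Fin n) ℝ)
    (h : ∀ lam : ℂ, (Polynomial.aeval lam) A.charpoly = 0 →
      ¬ (Polynomial.aeval (-lam)) U.charpoly = 0)
    (Y : Matrix (Fin m) (Fin n) ℝ) (hY : A * Y + Y * U = 0) : Y = 0 := by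
  set f : ℝ →+* ℂ := algebraMap ℝ ℂ with hf
  set A' := A.map f with hA'
  set U' := U.map f with hU'
  set Y' := Y.map f with hY'
  have hmapneg : (-U).map f = -U' := by
    ext i j; simp [hU', hf]
  have hbase : A' * Y' = Y' * (-U') := by
    have h1 : A * Y = Y * (-U) := by
      rw [Matrix.mul_neg, eq_neg_iff_add_eq_zero]; exact hY
    have h2 := congrArg (fun M => M.map (f : ℝ → ℂ)) h1
    simp only [Matrix.map_mul] at h2
    rw [h2, hmapneg]
  have hpow : ∀ k : ℕ, A' ^ k * Y' = Y' * (-U') ^ k := by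
    intro k
    induction k with
    | zero => simp
    | succ k ih =>
      rw [pow_succ, Matrix.mul_assoc, hbase, ← Matrix.mul_assoc, ih, Matrix.mul_assoc, ← pow_succ]
  have haev : ∀ p : ℂ[X], (aeval A') p * Y' = Y' * (aeval (-U')) p := by
    intro p
    rw [Polynomial.aeval_eq_sum_range (x := A'), Polynomial.aeval_eq_sum_range (x := -U'),
      Matrix.sum_mul, Matrix.mul_sum]
    refine Finset.sum_congr rfl fun i _ => ?_
    rw [Matrix.smul_mul, Matrix.mul_smul, hpow]
  have hCH : Y' * (aeval (-U')) A'.charpoly = 0 := by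
    rw [← haev, Matrix.aeval_self_charpoly, Matrix.zero_mul]
  have hsplit : A'.charpoly
      = ((A'.charpoly.roots.map (fun r => X - C r)).toList).prod := by
    conv_lhs => rw [(IsAlgClosed.splits A'.charpoly).eq_prod_roots_of_monic A'.charpoly_monic,
      ← Multiset.prod_toList]
  have hfac : ∀ r : ℂ, ((aeval (-U')) (X - C r)).det = (aeval (-r)) U.charpoly := by
    intro r
    rw [map_sub, aeval_X, aeval_C]
    have : -U' - (algebraMap ℂ (Matrix (Fin n) (Fin n) ℂ)) r
        = (-r) • (1 : Matrix (Fin n) (Fin n) ℂ) - U' := by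
      rw [Algebra.algebraMap_eq_smul_one, neg_smul]; abel
    rw [this, ← my_eval_charpoly, hU', Matrix.charpoly_map, Polynomial.eval_map,
      ← Polynomial.aeval_def]
  have hdet : ((aeval (-U')) A'.charpoly).det ≠ 0 := by
    conv_lhs => rw [hsplit, map_list_prod]
    have hdl : ∀ l : List (Matrix (Fin n) (Fin n) ℂ), l.prod.det = (l.map Matrix.det).prod := by
      intro l
      induction l with
      | nil => simp
      | cons a t ih => simp [Matrix.det_mul, ih]
    rw [hdl, List.map_map]
    apply List.prod_ne_zero
    intro h0
    rw [List.mem_map] at h0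
    obtain ⟨q, hq, hq0⟩ := h0
    rw [Multiset.mem_toList, Multiset.mem_map] at hq
    obtain ⟨r, hr, rfl⟩ := hq
    have hroot : (aeval r) A.charpoly = 0 := by
      have h1 : A'.charpoly.eval r = 0 := (Polynomial.isRoot_of_mem_roots hr)
      rwa [hA', Matrix.charpoly_map, Polynomial.eval_map, ← Polynomial.aeval_def] at h1
    apply h r hroot
    rw [← hfac r]
    simpa using hq0
  have hYz : Y' = 0 := by
    have hu : IsUnit ((aeval (-U')) A'.charpoly).det := isUnit_iff_ne_zero.mpr hdet
    calc Y' = Y' * ((aeval (-U')) A'.charpoly * ((aeval (-U')) A'.charpoly)⁻¹) := by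
          rw [Matrix.mul_nonsing_inv _ hu, Matrix.mul_one]
      _ = (Y' * (aeval (-U')) A'.charpoly) * ((aeval (-U')) A'.charpoly)⁻¹ := by
          rw [Matrix.mul_assoc]
      _ = 0 := by rw [hCH, Matrix.zero_mul]
  ext i j
  have := congrFun (congrFun hYz i) j
  simpa [hY', hf] using this

/-- If no complex eigenvalue `lam` of `A` is such that `-lam` is a complex eigenvalue of `U`,
then for every `B` the Sylvester equation `A X + X U + B = 0` has a unique solution;
equivalently `X ↦ A X + X U` is bijective. -/
theorem stmt_1 {m n : ℕ} (A : Matrix (Fin m) (Fin m) ℝ) (U : Matrix (Fin n) (Fin n) ℝ)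
    (h : ∀ lam : ℂ, (Polynomial.aeval lam) A.charpoly = 0 →
      ¬ (Polynomial.aeval (-lam)) U.charpoly = 0) :
    (∀ B : Matrix (Fin m) (Fin n) ℝ,
      ∃! X : Matrix (Fin m) (Fin n) ℝ, A * X + X * U + B = 0) ∧
    Function.Bijective (fun X : Matrix (Fin m) (Fin n) ℝ => A * X + X * U) := by
  let L : Matrix (Fin m) (Fin n) ℝ →ₗ[ℝ] Matrix (Fin m) (Fin n) ℝ :=
    { toFun := fun X => A * X + X * U
      map_add' := fun X Y => by
        simp only [Matrix.mul_add, Matrix.add_mul]; abel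
      map_smul' := fun c X => by
        simp [Matrix.mul_smul, Matrix.smul_mul] }
  have hinj : Function.Injective L := by
    intro X Y hXY
    have h1 : A * (X - Y) + (X - Y) * U = 0 := by
      have h2 : A * (X - Y) + (X - Y) * U = (A * X + X * U) - (A * Y + Y * U) := by
        rw [Matrix.mul_sub, Matrix.sub_mul]; abel
      rw [h2]
      have : A * X + X * U = A * Y + Y * U := hXY
      rw [this, sub_self]
    exact sub_eq_zero.mp (my_key A U h (X - Y) h1)
  have hbij : Function.Bijective L :=
    ⟨hinj, LinearMap.injective_iff_surjective.mp hinj⟩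
  have hLfun : (fun X : Matrix (Fin m) (Fin n) ℝ => A * X + X * U) = ⇑L := rfl
  constructor
  · intro B
    obtain ⟨X, hX⟩ := hbij.2 (-B)
    refine ⟨X, ?_, ?_⟩
    · show A * X + X * U + B = 0
      have : A * X + X * U = -B := hX
      rw [this, neg_add_cancel]
    · intro Y hYeq
      apply hinj
      show A * Y + Y * U = A * X + X * U
      have hXv : A * X + X * U = -B := hX
      rw [hXv, eq_neg_iff_add_eq_zero]
      exact hYeq
  · rw [hLfun]; exact hbij
end

section
/- Suppose Ψ solves the Riccati equation and Ψ̂ solves the dual Riccati equation. Then the Wiener–Hopf factorisation M · [[I, Ψ], [Ψ̂, I]] = [[I, Ψ], [Ψ̂, I]] · [[Û, 0], [0, −U]] holds, where M = [[A, B], [−C, −D]], U = D + CΨ and Û = A + BΨ̂. -/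
open Matrix

/-- Wiener–Hopf factorisation: if `Ψ` solves the Riccati equation and `Ψh` solves the dual
Riccati equation, then `M · [[I, Ψ], [Ψh, I]] = [[I, Ψ], [Ψh, I]] · [[Û, 0], [0, -U]]` where
`M = [[A, B], [-C, -D]]`, `U = D + CΨ` and `Û = A + BΨh`. -/
theorem stmt_3 {mp mm : ℕ} (A : Matrix (Fin mp) (Fin mp) ℝ) (B : Matrix (Fin mp) (Fin mm) ℝ)
    (C : Matrix (Fin mm) (Fin mp) ℝ) (D : Matrix (Fin mm) (Fin mm) ℝ)
    (Ψ : Matrix (Fin mp) (Fin mm) ℝ) (Ψh : Matrix (Fin mm) (Fin mp) ℝ)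
    (hΨ : B + A * Ψ + Ψ * D + Ψ * C * Ψ = 0)
    (hΨh : C + D * Ψh + Ψh * A + Ψh * B * Ψh = 0) :
    Matrix.fromBlocks A B (-C) (-D) * Matrix.fromBlocks 1 Ψ Ψh 1 =
      Matrix.fromBlocks 1 Ψ Ψh 1 *
        Matrix.fromBlocks (A + B * Ψh) 0 0 (-(D + C * Ψ)) := by
  rw [Matrix.fromBlocks_multiply, Matrix.fromBlocks_multiply, Matrix.fromBlocks_inj]
  simp only [Matrix.one_mul, Matrix.mul_one, Matrix.mul_zero, Matrix.zero_mul,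
    Matrix.mul_neg, Matrix.neg_mul, Matrix.mul_add, Matrix.add_mul, Matrix.mul_assoc,
    zero_add, add_zero, neg_add, neg_neg, neg_zero] at hΨ hΨh ⊢
  refine ⟨?_, ?_, ?_, ?_⟩
  · trivial
  · linear_combination (norm := abel) hΨ
  · linear_combination (norm := abel) -hΨh
  · abel
end

section
/- Suppose Ψ solves the Riccati equation and Ψ̂ solves the dual Riccati equation. Then the second Wiener–Hopf factorisation [[I, −Ψ], [−Ψ̂, I]] · M = [[K, 0], [0, −K̂]] · [[I, −Ψ], [−Ψ̂, I]] holds, where M = [[A, B], [−C, −D]], K = A + ΨC and K̂ = D + Ψ̂B. -/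
open Matrix

/-- Second Wiener–Hopf factorisation: if `Ψ` solves the Riccati equation and `Ψh` the dual
one, then `[[I, -Ψ], [-Ψh, I]] · M = [[K, 0], [0, -K̂]] · [[I, -Ψ], [-Ψh, I]]` where
`M = [[A, B], [-C, -D]]`, `K = A + ΨC` and `K̂ = D + Ψh B`. -/
theorem stmt_4 {mp mm : ℕ} (A : Matrix (Fin mp) (Fin mp) ℝ) (B : Matrix (Fin mp) (Fin mm) ℝ)
    (C : Matrix (Fin mm) (Fin mp) ℝ) (D : Matrix (Fin mm) (Fin mm) ℝ)
    (Ψ : Matrix (Fin mp) (Fin mm) ℝ) (Ψh : Matrix (Fin mm) (Fin mp) ℝ)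
    (hΨ : B + A * Ψ + Ψ * D + Ψ * C * Ψ = 0)
    (hΨh : C + D * Ψh + Ψh * A + Ψh * B * Ψh = 0) :
    Matrix.fromBlocks 1 (-Ψ) (-Ψh) 1 * Matrix.fromBlocks A B (-C) (-D) =
      Matrix.fromBlocks (A + Ψ * C) 0 0 (-(D + Ψh * B)) *
        Matrix.fromBlocks 1 (-Ψ) (-Ψh) 1 := by
  rw [Matrix.fromBlocks_multiply, Matrix.fromBlocks_multiply, Matrix.fromBlocks_inj]
  refine ⟨?_, ?_, ?_, ?_⟩
  · simp only [Matrix.one_mul, Matrix.mul_one, Matrix.neg_mul, Matrix.mul_neg, neg_neg,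
      Matrix.zero_mul, Matrix.mul_zero, add_zero, zero_add, neg_zero]
  · simp only [Matrix.one_mul, Matrix.mul_one, Matrix.neg_mul, Matrix.mul_neg, neg_neg,
      Matrix.zero_mul, Matrix.mul_zero, add_zero, zero_add, Matrix.add_mul]
    have h : (B + Ψ * D) + (A * Ψ + Ψ * C * Ψ) = 0 := by rw [← hΨ]; abel
    simp only [eq_neg_of_add_eq_zero_left h, Matrix.add_mul, neg_neg]
  · simp only [Matrix.one_mul, Matrix.mul_one, Matrix.neg_mul, Matrix.mul_neg, neg_neg,
      Matrix.zero_mul, Matrix.mul_zero, add_zero, zero_add, Matrix.add_mul]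
    have h : (-(Ψh * A) + -C) + -(D * Ψh + Ψh * B * Ψh) = 0 := by
      have : -(C + D * Ψh + Ψh * A + Ψh * B * Ψh) = -0 := by rw [hΨh]
      rw [neg_zero] at this
      rw [← this]; abel
    simp only [eq_neg_of_add_eq_zero_left h, Matrix.add_mul, neg_neg]
  · simp only [Matrix.one_mul, Matrix.mul_one, Matrix.neg_mul, Matrix.mul_neg, neg_neg,
      Matrix.zero_mul, Matrix.mul_zero, add_zero, zero_add, neg_add, neg_zero]
    abel
end

section
/- Suppose Ψ solves the Riccati equation and Ψ̂ solves the dual Riccati equation. Then the intertwining relations K(I − ΨΨ̂) = (I − ΨΨ̂)Û and K̂(I − Ψ̂Ψ) = (I − Ψ̂Ψ)U hold, where U = D + CΨ, Û = A + BΨ̂, K = A + ΨC and K̂ = D + Ψ̂B. -/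
open Matrix

/-- Intertwining relations: if `Ψ` solves the Riccati equation and `Ψh` the dual one, then
`K(I - ΨΨh) = (I - ΨΨh)Û` and `K̂(I - ΨhΨ) = (I - ΨhΨ)U`, where `U = D + CΨ`, `Û = A + BΨh`,
`K = A + ΨC` and `K̂ = D + ΨhB`. -/
theorem stmt_5 {mp mm : ℕ} (A : Matrix (Fin mp) (Fin mp) ℝ) (B : Matrix (Fin mp) (Fin mm) ℝ)
    (C : Matrix (Fin mm) (Fin mp) ℝ) (D : Matrix (Fin mm) (Fin mm) ℝ)
    (Ψ : Matrix (Fin mp) (Fin mm) ℝ) (Ψh : Matrix (Fin mm) (Fin mp) ℝ)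
    (hΨ : B + A * Ψ + Ψ * D + Ψ * C * Ψ = 0)
    (hΨh : C + D * Ψh + Ψh * A + Ψh * B * Ψh = 0) :
    (A + Ψ * C) * (1 - Ψ * Ψh) = (1 - Ψ * Ψh) * (A + B * Ψh) ∧
    (D + Ψh * B) * (1 - Ψh * Ψ) = (1 - Ψh * Ψ) * (D + C * Ψ) := by
  constructor
  · have e : (A + Ψ * C) * (1 - Ψ * Ψh) - (1 - Ψ * Ψh) * (A + B * Ψh)
        = -((B + A * Ψ + Ψ * D + Ψ * C * Ψ) * Ψh)
          + Ψ * (C + D * Ψh + Ψh * A + Ψh * B * Ψh) := by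
      simp only [Matrix.add_mul, Matrix.mul_add, Matrix.sub_mul, Matrix.mul_sub,
        Matrix.mul_assoc, Matrix.one_mul, Matrix.mul_one, Matrix.neg_mul, Matrix.mul_neg]
      abel
    rw [hΨ, hΨh] at e
    exact sub_eq_zero.mp (by simpa using e)
  · have e : (D + Ψh * B) * (1 - Ψh * Ψ) - (1 - Ψh * Ψ) * (D + C * Ψ)
        = -((C + D * Ψh + Ψh * A + Ψh * B * Ψh) * Ψ)
          + Ψh * (B + A * Ψ + Ψ * D + Ψ * C * Ψ) := by
      simp only [Matrix.add_mul, Matrix.mul_add, Matrix.sub_mul, Matrix.mul_sub,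
        Matrix.mul_assoc, Matrix.one_mul, Matrix.mul_one, Matrix.neg_mul, Matrix.mul_neg]
      abel
    rw [hΨ, hΨh] at e
    exact sub_eq_zero.mp (by simpa using e)
end

section
/- Suppose Ψ solves the Riccati equation and Ψ̂ solves the dual Riccati equation. If I − ΨΨ̂ is invertible then Û = (I − ΨΨ̂)⁻¹ K (I − ΨΨ̂), so K and Û are similar matrices; and if I − Ψ̂Ψ is invertible then K̂ = (I − Ψ̂Ψ) U (I − Ψ̂Ψ)⁻¹, so K̂ and U are similar matrices. In particular, under these invertibility assumptions K and Û have the same characteristic polynomial, and K̂ and U have the same characteristic polynomial. -/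
open Matrix Polynomial

lemma charpoly_conj' {n : ℕ} (P M : Matrix (Fin n) (Fin n) ℝ) (h : IsUnit P.det) :
    (P⁻¹ * M * P).charpoly = M.charpoly := by
  have hPinv : IsUnit (P⁻¹).det := isUnit_nonsing_inv_det P h
  have key : charmatrix (P⁻¹ * M * P) =
      (P⁻¹).map C * charmatrix M * P.map C := by
    unfold charmatrix
    rw [mul_sub, sub_mul]
    congr 1
    · have hc : Commute ((scalar (Fin n)) (X : ℝ[X])) (P.map C) :=
        scalar_commute _ (fun r' => Commute.all _ _) _
      rw [Matrix.mul_assoc, hc.eq, ← Matrix.mul_assoc, ← Matrix.map_mul,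
        nonsing_inv_mul P h, Matrix.map_one _ (map_zero _) (map_one _), Matrix.one_mul]
    · simp only [RingHom.mapMatrix_apply, ← Matrix.map_mul]
  rw [Matrix.charpoly, Matrix.charpoly, key, det_mul, det_mul]
  rw [mul_comm ((P⁻¹).map C).det, mul_assoc, ← det_mul, ← Matrix.map_mul,
    nonsing_inv_mul P h, Matrix.map_one _ (map_zero _) (map_one _), det_one, mul_one]

/-- If `Ψ` solves the Riccati equation and `Ψh` the dual one, then when `I - ΨΨh` is
invertible, `Û = (I - ΨΨh)⁻¹ K (I - ΨΨh)` and `K`, `Û` have the same characteristic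
polynomial; when `I - ΨhΨ` is invertible, `K̂ = (I - ΨhΨ) U (I - ΨhΨ)⁻¹` and `K̂`, `U` have
the same characteristic polynomial.  Here `U = D + CΨ`, `Û = A + BΨh`, `K = A + ΨC`,
`K̂ = D + ΨhB`. -/
theorem stmt_6 {mp mm : ℕ} (A : Matrix (Fin mp) (Fin mp) ℝ) (B : Matrix (Fin mp) (Fin mm) ℝ)
    (C : Matrix (Fin mm) (Fin mp) ℝ) (D : Matrix (Fin mm) (Fin mm) ℝ)
    (Ψ : Matrix (Fin mp) (Fin mm) ℝ) (Ψh : Matrix (Fin mm) (Fin mp) ℝ)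
    (hΨ : B + A * Ψ + Ψ * D + Ψ * C * Ψ = 0)
    (hΨh : C + D * Ψh + Ψh * A + Ψh * B * Ψh = 0) :
    (IsUnit (1 - Ψ * Ψh).det →
      (A + B * Ψh) = (1 - Ψ * Ψh)⁻¹ * (A + Ψ * C) * (1 - Ψ * Ψh) ∧
      (A + Ψ * C).charpoly = (A + B * Ψh).charpoly) ∧
    (IsUnit (1 - Ψh * Ψ).det →
      (D + Ψh * B) = (1 - Ψh * Ψ) * (D + C * Ψ) * (1 - Ψh * Ψ)⁻¹ ∧
      (D + Ψh * B).charpoly = (D + C * Ψ).charpoly) := by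
  have key1 : (1 - Ψ * Ψh) * (A + B * Ψh) = (A + Ψ * C) * (1 - Ψ * Ψh) := by
    have h1 : (B + A * Ψ + Ψ * D + Ψ * C * Ψ) * Ψh = 0 := by rw [hΨ]; simp
    have h2 : Ψ * (C + D * Ψh + Ψh * A + Ψh * B * Ψh) = 0 := by rw [hΨh]; simp
    have e : (1 - Ψ * Ψh) * (A + B * Ψh) - (A + Ψ * C) * (1 - Ψ * Ψh)
        = (B + A * Ψ + Ψ * D + Ψ * C * Ψ) * Ψh - Ψ * (C + D * Ψh + Ψh * A + Ψh * B * Ψh) := by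
      simp only [Matrix.add_mul, Matrix.mul_add, Matrix.sub_mul, Matrix.mul_sub,
        Matrix.one_mul, Matrix.mul_one, Matrix.mul_assoc]
      abel
    rw [h1, h2, sub_zero] at e
    exact sub_eq_zero.mp e
  have key2 : (D + Ψh * B) * (1 - Ψh * Ψ) = (1 - Ψh * Ψ) * (D + C * Ψ) := by
    have h1 : Ψh * (B + A * Ψ + Ψ * D + Ψ * C * Ψ) = 0 := by rw [hΨ]; simp
    have h2 : (C + D * Ψh + Ψh * A + Ψh * B * Ψh) * Ψ = 0 := by rw [hΨh]; simp
    have e : (D + Ψh * B) * (1 - Ψh * Ψ) - (1 - Ψh * Ψ) * (D + C * Ψ)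
        = Ψh * (B + A * Ψ + Ψ * D + Ψ * C * Ψ) - (C + D * Ψh + Ψh * A + Ψh * B * Ψh) * Ψ := by
      simp only [Matrix.add_mul, Matrix.mul_add, Matrix.sub_mul, Matrix.mul_sub,
        Matrix.one_mul, Matrix.mul_one, Matrix.mul_assoc]
      abel
    rw [h1, h2, sub_zero] at e
    exact sub_eq_zero.mp e
  constructor
  · intro h
    have e1 : (A + B * Ψh) = (1 - Ψ * Ψh)⁻¹ * (A + Ψ * C) * (1 - Ψ * Ψh) := by
      rw [mul_assoc, ← key1, ← mul_assoc, nonsing_inv_mul _ h, one_mul]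
    refine ⟨e1, ?_⟩
    rw [e1, charpoly_conj' _ _ h]
  · intro h
    have e2 : (D + Ψh * B) = (1 - Ψh * Ψ) * (D + C * Ψ) * (1 - Ψh * Ψ)⁻¹ := by
      rw [← key2, mul_assoc, mul_nonsing_inv _ h, mul_one]
    refine ⟨e2, ?_⟩
    rw [e2]
    have : (1 - Ψh * Ψ) * (D + C * Ψ) * (1 - Ψh * Ψ)⁻¹
        = ((1 - Ψh * Ψ)⁻¹)⁻¹ * (D + C * Ψ) * (1 - Ψh * Ψ)⁻¹ := by
      rw [nonsing_inv_nonsing_inv _ h]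
    rw [this, charpoly_conj' _ _ (isUnit_nonsing_inv_det _ h)]
end

section
/- Suppose Ψ solves the Riccati equation, Ψ̂ solves the dual Riccati equation, and the block matrix [[I, Ψ], [Ψ̂, I]] is invertible. Then M = [[A, B], [−C, −D]] is similar to the block-diagonal matrix [[Û, 0], [0, −U]], and consequently the characteristic polynomial of M equals the product of the characteristic polynomial of Û and the characteristic polynomial of −U; in particular the multiset of complex eigenvalues of M is the union of the multisets of complex eigenvalues of Û and of −U. -/
open Matrix Polynomial

lemma charpoly_of_mul_eq {n : Type*} [DecidableEq n] [Fintype n]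
    {M S N : Matrix n n ℝ} (hS : IsUnit S.det) (h : M * S = S * N) :
    M.charpoly = N.charpoly := by
  set S' := (Polynomial.C : ℝ →+* ℝ[X]).mapMatrix S with hS'
  have key : charmatrix M * S' = S' * charmatrix N := by
    have hmap : (Polynomial.C : ℝ →+* ℝ[X]).mapMatrix (M * S)
        = (Polynomial.C : ℝ →+* ℝ[X]).mapMatrix (S * N) := by rw [h]
    simp only [_root_.map_mul] at hmap
    simp only [charmatrix, sub_mul, mul_sub, hS', hmap]
    rw [Matrix.scalar_commute X (Commute.all X) ((Polynomial.C : ℝ →+* ℝ[X]).mapMatrix S)]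
  have hdet := congrArg Matrix.det key
  rw [Matrix.det_mul, Matrix.det_mul, mul_comm (charmatrix M).det _] at hdet
  have hSu : IsUnit S'.det := by rw [hS', ← RingHom.map_det]; exact hS.map _
  rw [Matrix.charpoly, Matrix.charpoly]
  exact hSu.mul_left_cancel hdet

/-- If `Ψ` solves the Riccati equation, `Ψh` solves the dual Riccati equation, and the block
matrix `[[I, Ψ], [Ψh, I]]` is invertible, then `M = [[A, B], [-C, -D]]` is similar to the
block-diagonal matrix `[[Û, 0], [0, -U]]`; hence the characteristic polynomial of `M` is the
product of those of `Û` and `-U`, and the multiset of complex eigenvalues of `M` is the union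
of the multisets of complex eigenvalues of `Û` and of `-U`. -/
theorem stmt_7 {mp mm : ℕ} (A : Matrix (Fin mp) (Fin mp) ℝ) (B : Matrix (Fin mp) (Fin mm) ℝ)
    (C : Matrix (Fin mm) (Fin mp) ℝ) (D : Matrix (Fin mm) (Fin mm) ℝ)
    (Ψ : Matrix (Fin mp) (Fin mm) ℝ) (Ψh : Matrix (Fin mm) (Fin mp) ℝ)
    (hΨ : B + A * Ψ + Ψ * D + Ψ * C * Ψ = 0)
    (hΨh : C + D * Ψh + Ψh * A + Ψh * B * Ψh = 0)
    (hL : IsUnit (Matrix.fromBlocks (1 : Matrix (Fin mp) (Fin mp) ℝ) Ψ Ψh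
      (1 : Matrix (Fin mm) (Fin mm) ℝ)).det) :
    (∃ S : Matrix (Fin mp ⊕ Fin mm) (Fin mp ⊕ Fin mm) ℝ, IsUnit S.det ∧
      Matrix.fromBlocks A B (-C) (-D) =
        S * Matrix.fromBlocks (A + B * Ψh) 0 0 (-(D + C * Ψ)) * S⁻¹) ∧
    (Matrix.fromBlocks A B (-C) (-D)).charpoly =
      (A + B * Ψh).charpoly * (-(D + C * Ψ)).charpoly ∧
    ((Matrix.fromBlocks A B (-C) (-D)).charpoly.map (algebraMap ℝ ℂ)).roots =
      ((A + B * Ψh).charpoly.map (algebraMap ℝ ℂ)).roots +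
        ((-(D + C * Ψ)).charpoly.map (algebraMap ℝ ℂ)).roots := by
  set S : Matrix (Fin mp ⊕ Fin mm) (Fin mp ⊕ Fin mm) ℝ :=
    Matrix.fromBlocks 1 Ψ Ψh 1 with hSdef
  set N : Matrix (Fin mp ⊕ Fin mm) (Fin mp ⊕ Fin mm) ℝ :=
    Matrix.fromBlocks (A + B * Ψh) 0 0 (-(D + C * Ψ)) with hNdef
  set M : Matrix (Fin mp ⊕ Fin mm) (Fin mp ⊕ Fin mm) ℝ :=
    Matrix.fromBlocks A B (-C) (-D) with hMdef
  have hMS : M * S = S * N := by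
    rw [hMdef, hSdef, hNdef, Matrix.fromBlocks_multiply, Matrix.fromBlocks_multiply,
      Matrix.fromBlocks_inj]
    refine ⟨by simp, ?_, ?_, by simp [neg_add]⟩
    · simp only [Matrix.mul_one, Matrix.one_mul, Matrix.mul_zero, Matrix.zero_mul, zero_add,
        add_zero, Matrix.mul_neg, Matrix.neg_mul, Matrix.mul_add, ← Matrix.mul_assoc]
      rw [← sub_eq_zero, ← hΨ]; abel
    · simp only [Matrix.mul_one, Matrix.one_mul, Matrix.mul_zero, Matrix.zero_mul, zero_add,
        add_zero, Matrix.mul_neg, Matrix.neg_mul, Matrix.mul_add, ← Matrix.mul_assoc]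
      rw [← sub_eq_zero, ← neg_eq_zero, ← hΨh]; abel
  have hchar : M.charpoly = N.charpoly := charpoly_of_mul_eq hL hMS
  have hNchar : N.charpoly = (A + B * Ψh).charpoly * (-(D + C * Ψ)).charpoly := by
    rw [hNdef]
    exact Matrix.charpoly_fromBlocks_zero₁₂ _ _ _
  refine ⟨⟨S, hL, ?_⟩, hchar.trans hNchar, ?_⟩
  · rw [← hMS, Matrix.mul_assoc, Matrix.mul_nonsing_inv _ hL, Matrix.mul_one]
  · rw [hchar, hNchar, Polynomial.map_mul]
    exact Polynomial.roots_mul (mul_ne_zero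
      (((Matrix.charpoly_monic _).map _).ne_zero)
      (((Matrix.charpoly_monic _).map _).ne_zero))
end

section
/- Let K be a real n×n matrix all of whose complex eigenvalues have strictly negative real part. Then K is invertible, the function t ↦ e^{Kt} is (entrywise) integrable on [0,∞), and ∫₀^∞ e^{Kt} dt = −K⁻¹. Moreover e^{Kt} → 0 as t → ∞. -/
open Matrix MeasureTheory

open Polynomial NormedSpace Filter

lemma aux_eval_charpoly {m : Type*} [Fintype m] [DecidableEq m] {R : Type*} [CommRing R]
    (M : Matrix m m R) (μ : R) :
    M.charpoly.eval μ = (Matrix.diagonal (fun _ => μ) - M).det := by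
  rw [Matrix.charpoly, ← Polynomial.coe_evalRingHom, RingHom.map_det]
  congr 1
  ext i j
  by_cases h : i = j
  · subst h; simp [Matrix.charmatrix_apply_eq]
  · simp [Matrix.charmatrix_apply_ne _ _ _ h, Matrix.diagonal_apply_ne _ h]

lemma aux_pow_le (ε t : ℝ) (hε : 0 < ε) (ht : 0 ≤ t) (j : ℕ) :
    t ^ j ≤ (j.factorial : ℝ) * ε⁻¹ ^ j * Real.exp (ε * t) := by
  have h1 : (ε * t) ^ j / j.factorial ≤ Real.exp (ε * t) := by
    refine le_trans ?_ (Real.sum_le_exp_of_nonneg (by positivity) (j + 1))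
    exact Finset.single_le_sum (f := fun i => (ε * t) ^ i / i.factorial)
      (fun i _ => by positivity) (Finset.self_mem_range_succ j)
  have h2 : t ^ j = (ε * t) ^ j * ε⁻¹ ^ j := by
    rw [mul_pow, mul_comm (ε ^ j), mul_assoc, ← mul_pow, mul_inv_cancel₀ hε.ne', one_pow, mul_one]
  rw [h2]
  calc (ε * t) ^ j * ε⁻¹ ^ j ≤ (Real.exp (ε * t) * j.factorial) * ε⁻¹ ^ j := by
        gcongr
        rw [div_le_iff₀ (by positivity)] at h1
        exact h1
    _ = (j.factorial : ℝ) * ε⁻¹ ^ j * Real.exp (ε * t) := by ring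

lemma aux_vec_bound {n : ℕ} (M : Matrix (Fin n) (Fin n) ℂ) (μ : ℂ)
    (ε : ℝ) (hε : 0 < ε) (hμ : μ.re ≤ -(2*ε)) (v : Fin n → ℂ) (k : ℕ)
    (hk : ((M - μ • 1) ^ k) *ᵥ v = 0) (t : ℝ) (ht : 0 ≤ t) :
    ‖NormedSpace.exp ((t : ℂ) • M) *ᵥ v‖
      ≤ (∑ j ∈ Finset.range k, ε⁻¹ ^ j * ‖((M - μ • 1) ^ j) *ᵥ v‖) * Real.exp (-ε * t) := by
  letI : SeminormedRing (Matrix (Fin n) (Fin n) ℂ) := Matrix.linftyOpSemiNormedRing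
  letI : NormedRing (Matrix (Fin n) (Fin n) ℂ) := Matrix.linftyOpNormedRing
  letI : NormedAlgebra ℂ (Matrix (Fin n) (Fin n) ℂ) := Matrix.linftyOpNormedAlgebra
  letI : NormedAlgebra ℚ (Matrix (Fin n) (Fin n) ℂ) := Matrix.linftyOpNormedAlgebra
  set N : Matrix (Fin n) (Fin n) ℂ := M - μ • 1 with hN
  -- split the exponential
  have hsplit : (t : ℂ) • M = ((t : ℂ) * μ) • (1 : Matrix (Fin n) (Fin n) ℂ) + (t : ℂ) • N := by
    rw [hN, smul_sub, smul_smul]; abel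
  have hcomm : Commute (((t : ℂ) * μ) • (1 : Matrix (Fin n) (Fin n) ℂ)) ((t : ℂ) • N) :=
    ((Commute.one_left ((t : ℂ) • N)).smul_left _)
  have hexp1 : NormedSpace.exp (((t : ℂ) * μ) • (1 : Matrix (Fin n) (Fin n) ℂ))
      = Complex.exp ((t : ℂ) * μ) • (1 : Matrix (Fin n) (Fin n) ℂ) := by
    erw [← Algebra.algebraMap_eq_smul_one, ← algebraMap_exp_comm, ← Complex.exp_eq_exp_ℂ,
      Algebra.algebraMap_eq_smul_one]
  have hsplit2 : NormedSpace.exp ((t : ℂ) • M)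
      = Complex.exp ((t : ℂ) * μ) • NormedSpace.exp ((t : ℂ) • N) := by
    erw [hsplit, NormedSpace.exp_add_of_commute hcomm, hexp1, smul_mul_assoc, one_mul]
    rfl
  -- the truncated series applied to v
  have hvanish : ∀ j, k ≤ j → (N ^ j) *ᵥ v = 0 := by
    intro j hj
    have : N ^ j = N ^ (j - k) * N ^ k := by
      rw [← pow_add]; congr 1; omega
    rw [this, ← Matrix.mulVec_mulVec, hk, Matrix.mulVec_zero]
  let L : Matrix (Fin n) (Fin n) ℂ →ₗ[ℂ] (Fin n → ℂ) :=
    { toFun := fun A => A *ᵥ v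
      map_add' := fun A B => Matrix.add_mulVec A B v
      map_smul' := fun c A => Matrix.smul_mulVec c A v }
  have hseries : NormedSpace.exp ((t : ℂ) • N) *ᵥ v
      = ∑ j ∈ Finset.range k, ((j.factorial : ℂ)⁻¹ * (t : ℂ) ^ j) • ((N ^ j) *ᵥ v) := by
    have hsum := NormedSpace.expSeries_summable' (𝕂 := ℂ) ((t : ℂ) • N)
    have hmap : NormedSpace.exp ((t : ℂ) • N) *ᵥ v
        = ∑' j : ℕ, L (((j.factorial : ℂ))⁻¹ • ((t : ℂ) • N) ^ j) := by
      rw [NormedSpace.exp_eq_tsum ℂ]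
      exact ((L.toContinuousLinearMap).map_tsum hsum).symm ▸ rfl
    rw [hmap]
    have hterm : ∀ j : ℕ, L (((j.factorial : ℂ))⁻¹ • ((t : ℂ) • N) ^ j)
        = ((j.factorial : ℂ)⁻¹ * (t : ℂ) ^ j) • ((N ^ j) *ᵥ v) := by
      intro j
      rw [_root_.smul_pow, L.map_smul, L.map_smul, smul_smul]
      rfl
    rw [tsum_congr hterm]
    refine tsum_eq_sum ?_
    intro j hj
    rw [hvanish j (by simpa using hj), smul_zero]
  -- norm estimates
  rw [hsplit2, Matrix.smul_mulVec, norm_smul, hseries]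
  have hnorme : ‖Complex.exp ((t : ℂ) * μ)‖ = Real.exp (t * μ.re) := by
    rw [Complex.norm_exp]
    congr 1
    simp [Complex.mul_re]
  rw [hnorme]
  calc Real.exp (t * μ.re) * ‖∑ j ∈ Finset.range k,
        ((j.factorial : ℂ)⁻¹ * (t : ℂ) ^ j) • ((N ^ j) *ᵥ v)‖
      ≤ Real.exp (t * μ.re) * ∑ j ∈ Finset.range k,
        (j.factorial : ℝ)⁻¹ * t ^ j * ‖(N ^ j) *ᵥ v‖ := by
        gcongr
        refine (norm_sum_le _ _).trans (le_of_eq (Finset.sum_congr rfl fun j _ => ?_))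
        rw [norm_smul, norm_mul, norm_inv, norm_pow, Complex.norm_natCast,
          Complex.norm_real, Real.norm_of_nonneg ht]
    _ ≤ (∑ j ∈ Finset.range k, ε⁻¹ ^ j * ‖(N ^ j) *ᵥ v‖) * Real.exp (-ε * t) := by
        rw [Finset.mul_sum, Finset.sum_mul]
        refine Finset.sum_le_sum fun j _ => ?_
        have h1 : t ^ j ≤ (j.factorial : ℝ) * ε⁻¹ ^ j * Real.exp (ε * t) :=
          aux_pow_le ε t hε ht j
        have h2 : Real.exp (t * μ.re) ≤ Real.exp (-(2*ε) * t) := by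
          apply Real.exp_le_exp.2
          calc t * μ.re ≤ t * (-(2*ε)) := by
                exact mul_le_mul_of_nonneg_left hμ ht
            _ = -(2*ε) * t := by ring
        calc Real.exp (t * μ.re) * ((j.factorial : ℝ)⁻¹ * t ^ j * ‖(N ^ j) *ᵥ v‖)
            ≤ Real.exp (-(2*ε) * t) * ((j.factorial : ℝ)⁻¹ *
              ((j.factorial : ℝ) * ε⁻¹ ^ j * Real.exp (ε * t)) * ‖(N ^ j) *ᵥ v‖) := by
              gcongr
          _ = ε⁻¹ ^ j * ‖(N ^ j) *ᵥ v‖ * (Real.exp (-(2*ε) * t) * Real.exp (ε * t)) *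
              ((j.factorial : ℝ) * (j.factorial : ℝ)⁻¹) := by ring
          _ = ε⁻¹ ^ j * ‖(N ^ j) *ᵥ v‖ * Real.exp (-ε * t) := by
              rw [← Real.exp_add, mul_inv_cancel₀ (by positivity), mul_one]
              congr 2
              ring

lemma aux_map {n : ℕ} (K : Matrix (Fin n) (Fin n) ℝ) (t : ℝ) :
    (NormedSpace.exp (t • K)).map (algebraMap ℝ ℂ)
      = NormedSpace.exp ((t : ℂ) • K.map (algebraMap ℝ ℂ)) := by
  letI : SeminormedRing (Matrix (Fin n) (Fin n) ℝ) := Matrix.linftyOpSemiNormedRing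
  letI : NormedRing (Matrix (Fin n) (Fin n) ℝ) := Matrix.linftyOpNormedRing
  letI : NormedAlgebra ℝ (Matrix (Fin n) (Fin n) ℝ) := Matrix.linftyOpNormedAlgebra
  letI : SeminormedRing (Matrix (Fin n) (Fin n) ℂ) := Matrix.linftyOpSemiNormedRing
  letI : NormedRing (Matrix (Fin n) (Fin n) ℂ) := Matrix.linftyOpNormedRing
  letI : NormedAlgebra ℝ (Matrix (Fin n) (Fin n) ℂ) := Matrix.linftyOpNormedAlgebra
  letI : NormedAlgebra ℂ (Matrix (Fin n) (Fin n) ℂ) := Matrix.linftyOpNormedAlgebra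
  letI : NormedAlgebra ℚ (Matrix (Fin n) (Fin n) ℝ) := Matrix.linftyOpNormedAlgebra
  letI : NormedAlgebra ℚ (Matrix (Fin n) (Fin n) ℂ) := Matrix.linftyOpNormedAlgebra
  let f : Matrix (Fin n) (Fin n) ℝ →ₐ[ℝ] Matrix (Fin n) (Fin n) ℂ :=
    (Complex.ofRealAm).mapMatrix
  have hf : Continuous f := f.toLinearMap.continuous_of_finiteDimensional
  have h1 : (NormedSpace.exp (t • K)).map (algebraMap ℝ ℂ)
      = NormedSpace.exp ((t • K).map (algebraMap ℝ ℂ)) :=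
    NormedSpace.map_exp f hf (t • K)
  rw [h1]
  have h2 : (t • K).map (algebraMap ℝ ℂ) = (t : ℂ) • K.map (algebraMap ℝ ℂ) := by
    ext i j
    simp [Complex.real_smul]
  rw [h2]

lemma aux_decay {n : ℕ} (K : Matrix (Fin n) (Fin n) ℝ)
    (hK : ∀ lam : ℂ, (Polynomial.aeval lam) K.charpoly = 0 → lam.re < 0) :
    ∃ C ε : ℝ, 0 < ε ∧ 0 ≤ C ∧ ∀ t : ℝ, 0 ≤ t → ∀ i j,
      |(NormedSpace.exp (t • K)) i j| ≤ C * Real.exp (-ε * t) := by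
  set Mc : Matrix (Fin n) (Fin n) ℂ := K.map (algebraMap ℝ ℂ) with hMc
  -- every "eigenvalue" (in the mulVec sense) of Mc is a root of K.charpoly over ℂ
  have heig : ∀ μ : ℂ, (∃ w : Fin n → ℂ, w ≠ 0 ∧ Mc *ᵥ w = μ • w) →
      Mc.charpoly.eval μ = 0 := by
    rintro μ ⟨w, hw, hww⟩
    have hdet : (Matrix.diagonal (fun _ => μ) - Mc).det = 0 := by
      rw [← Matrix.exists_mulVec_eq_zero_iff]
      refine ⟨w, hw, ?_⟩
      rw [Matrix.sub_mulVec, hww, ← Matrix.smul_one_eq_diagonal,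
        Matrix.smul_mulVec, Matrix.one_mulVec, sub_self]
    rw [aux_eval_charpoly, hdet]
  have hroot : ∀ μ : ℂ, Mc.charpoly.eval μ = 0 → μ.re < 0 := by
    intro μ hμ
    apply hK
    rw [Polynomial.aeval_def, ← Polynomial.eval_map, ← Matrix.charpoly_map]
    exact hμ
  -- choose a uniform ε
  set rs : Finset ℂ := Mc.charpoly.roots.toFinset with hrs
  set G : Finset ℝ := insert (-1 : ℝ) (rs.image Complex.re) with hG
  have hGne : G.Nonempty := Finset.insert_nonempty _ _
  set r : ℝ := G.max' hGne with hr
  have hrneg : r < 0 := by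
    have hmem : r ∈ G := Finset.max'_mem G hGne
    rw [hG, Finset.mem_insert] at hmem
    rcases hmem with h | h
    · rw [h]; norm_num
    · obtain ⟨μ, hμ, hμr⟩ := Finset.mem_image.1 h
      have hz : Mc.charpoly.eval μ = 0 :=
        (Polynomial.mem_roots (Mc.charpoly_monic.ne_zero)).1 (Multiset.mem_toFinset.1 hμ)
      rw [← hμr]; exact hroot μ hz
  set ε : ℝ := -r / 2 with hε
  have hεpos : 0 < ε := by rw [hε]; linarith
  have hre : ∀ μ : ℂ, Mc.charpoly.eval μ = 0 → μ.re ≤ -(2*ε) := by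
    intro μ hμ
    have hμroots : μ ∈ rs := by
      rw [hrs, Multiset.mem_toFinset,
        Polynomial.mem_roots (Mc.charpoly_monic.ne_zero)]
      exact hμ
    have : μ.re ∈ G := by
      rw [hG, Finset.mem_insert]
      exact Or.inr (Finset.mem_image_of_mem _ hμroots)
    have := Finset.le_max' G _ this
    rw [hε]; linarith
  -- submodule of vectors with exponential decay
  set S : Submodule ℂ (Fin n → ℂ) :=
    { carrier := {v | ∃ C : ℝ, 0 ≤ C ∧ ∀ t : ℝ, 0 ≤ t →
        ‖NormedSpace.exp ((t : ℂ) • Mc) *ᵥ v‖ ≤ C * Real.exp (-ε * t)}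
      add_mem' := by
        rintro a b ⟨Ca, hCa, ha⟩ ⟨Cb, hCb, hb⟩
        refine ⟨Ca + Cb, by linarith, fun t ht => ?_⟩
        rw [Matrix.mulVec_add, add_mul]
        exact (norm_add_le _ _).trans (add_le_add (ha t ht) (hb t ht))
      zero_mem' := ⟨0, le_refl _, fun t ht => by
        rw [Matrix.mulVec_zero, norm_zero, zero_mul]⟩
      smul_mem' := by
        rintro c v ⟨C, hC, h⟩
        refine ⟨‖c‖ * C, by positivity, fun t ht => ?_⟩
        rw [Matrix.mulVec_smul, norm_smul, mul_assoc]
        exact mul_le_mul_of_nonneg_left (h t ht) (norm_nonneg c)} with hS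
  have hSall : ∀ v, v ∈ S := by
    intro v
    have htop := Module.End.iSup_maxGenEigenspace_eq_top (Matrix.toLinAlgEquiv' Mc)
    have hle : (⨆ μ : ℂ, Module.End.maxGenEigenspace (Matrix.toLinAlgEquiv' Mc) μ) ≤ S := by
      refine iSup_le fun μ => ?_
      intro v hv
      rw [Module.End.mem_maxGenEigenspace] at hv
      obtain ⟨k, hk⟩ := hv
      have hk' : ((Mc - μ • 1) ^ k) *ᵥ v = 0 := by
        have : ((Matrix.toLinAlgEquiv' Mc - μ • 1) ^ k)
            = Matrix.toLinAlgEquiv' ((Mc - μ • 1) ^ k) := by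
          rw [map_pow, map_sub, _root_.map_smul, _root_.map_one]
        rw [this] at hk
        rwa [Matrix.toLinAlgEquiv'_apply] at hk
      by_cases hv0 : v = 0
      · rw [hv0]; exact S.zero_mem
      -- extract an eigenvalue to bound μ.re
      have hμre : μ.re ≤ -(2*ε) := by
        have hex : ∃ l, ((Mc - μ • 1) ^ (l+1)) *ᵥ v = 0 ∧ ((Mc - μ • 1) ^ l) *ᵥ v ≠ 0 := by
          by_contra hcon
          push_neg at hcon
          have hall : ∀ m, ((Mc - μ • 1) ^ (k - m)) *ᵥ v = 0 := by
            intro m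
            induction m with
            | zero => simpa using hk'
            | succ m ih =>
              by_cases hm : m < k
              · have : k - m = (k - (m+1)) + 1 := by omega
                rw [this] at ih
                exact hcon _ ih
              · have : k - (m+1) = k - m := by omega
                rw [this]; exact ih
          have := hall k
          simp only [Nat.sub_self, pow_zero, Matrix.one_mulVec] at this
          exact hv0 this
        obtain ⟨l, h1, h2⟩ := hex
        set w := ((Mc - μ • 1) ^ l) *ᵥ v with hw
        have hMw : Mc *ᵥ w = μ • w := by
          have hNw : (Mc - μ • 1) *ᵥ w = 0 := by
            rw [hw, Matrix.mulVec_mulVec, ← pow_succ']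
            exact h1
          rw [Matrix.sub_mulVec] at hNw
          have : (μ • (1 : Matrix (Fin n) (Fin n) ℂ)) *ᵥ w = μ • w := by
            rw [Matrix.smul_mulVec, Matrix.one_mulVec]
          rw [this] at hNw
          linear_combination (norm := module) hNw
        exact hre μ (heig μ ⟨w, h2, hMw⟩)
      exact ⟨∑ j ∈ Finset.range k, ε⁻¹ ^ j * ‖((Mc - μ • 1) ^ j) *ᵥ v‖,
        Finset.sum_nonneg fun j _ => by positivity,
        fun t ht => aux_vec_bound Mc μ ε hεpos hμre v k hk' t ht⟩
    rw [htop] at hle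
    exact hle Submodule.mem_top
  -- entrywise bound
  have hsingle := fun j : Fin n => hSall (Pi.single j 1)
  choose C hC0 hCb using hsingle
  refine ⟨∑ j, C j, ε, hεpos, Finset.sum_nonneg fun j _ => hC0 j, fun t ht i j => ?_⟩
  have hent : |(NormedSpace.exp (t • K)) i j|
      = ‖(NormedSpace.exp ((t : ℂ) • Mc)) i j‖ := by
    rw [← aux_map]
    simp [Matrix.map_apply, Complex.norm_real, Real.norm_eq_abs]
  rw [hent]
  have h1 : (NormedSpace.exp ((t : ℂ) • Mc)) i j
      = (NormedSpace.exp ((t : ℂ) • Mc) *ᵥ Pi.single j 1) i := by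
    simp [Matrix.mulVec_single]
  rw [h1]
  calc ‖(NormedSpace.exp ((t : ℂ) • Mc) *ᵥ Pi.single j 1) i‖
      ≤ ‖NormedSpace.exp ((t : ℂ) • Mc) *ᵥ Pi.single j 1‖ :=
        norm_le_pi_norm _ i
    _ ≤ C j * Real.exp (-ε * t) := hCb j t ht
    _ ≤ (∑ j', C j') * Real.exp (-ε * t) := by
        gcongr
        exact Finset.single_le_sum (fun j' _ => hC0 j') (Finset.mem_univ j)

/-- If all complex eigenvalues of `K` have strictly negative real part, then `K` is
invertible, `t ↦ e^{Kt}` is entrywise integrable on `[0,∞)` with `∫₀^∞ e^{Kt} dt = -K⁻¹`,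
and `e^{Kt} → 0` as `t → ∞`. -/
theorem stmt_9 {n : ℕ} (K : Matrix (Fin n) (Fin n) ℝ)
    (hK : ∀ lam : ℂ, (Polynomial.aeval lam) K.charpoly = 0 → lam.re < 0) :
    IsUnit K.det ∧
    (∀ i j, IntegrableOn (fun t : ℝ => (NormedSpace.exp (t • K)) i j) (Set.Ici 0)) ∧
    (Matrix.of fun i j => ∫ t in Set.Ici (0 : ℝ), (NormedSpace.exp (t • K)) i j) = -K⁻¹ ∧
    Filter.Tendsto (fun t : ℝ => NormedSpace.exp (t • K)) Filter.atTop (nhds 0) := by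
  obtain ⟨C, ε, hε, hC, hbound⟩ := aux_decay K hK
  set F : ℝ → Matrix (Fin n) (Fin n) ℝ := fun t => NormedSpace.exp (t • K) with hF
  -- invertibility
  have hdet : IsUnit K.det := by
    rw [isUnit_iff_ne_zero]
    intro h0
    have hc0 : K.charpoly.coeff 0 = 0 := by
      have hds := Matrix.det_eq_sign_charpoly_coeff K
      rw [h0] at hds
      rcases mul_eq_zero.1 hds.symm with h | h
      · exact absurd h (by positivity)
      · exact h
    have : (Polynomial.aeval (0 : ℂ)) K.charpoly = 0 := by
      rw [Polynomial.aeval_def, Polynomial.eval₂_at_zero, hc0, map_zero]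
    have := hK 0 this
    simp at this
  -- continuity of entries
  have hFcont : ∀ i j, Continuous fun t => F t i j := by
    intro i j
    letI : SeminormedRing (Matrix (Fin n) (Fin n) ℝ) := Matrix.linftyOpSemiNormedRing
    letI : NormedRing (Matrix (Fin n) (Fin n) ℝ) := Matrix.linftyOpNormedRing
    letI : NormedAlgebra ℝ (Matrix (Fin n) (Fin n) ℝ) := Matrix.linftyOpNormedAlgebra
    letI : NormedAlgebra ℚ (Matrix (Fin n) (Fin n) ℝ) := Matrix.linftyOpNormedAlgebra
    have h1 : Continuous F :=
      NormedSpace.exp_continuous.comp (continuous_id.smul continuous_const)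
    exact ((continuous_apply j).comp ((continuous_apply i).comp h1))
  -- integrability of the dominating function
  have hg : IntegrableOn (fun t : ℝ => C * Real.exp (-ε * t)) (Set.Ici 0) := by
    rw [integrableOn_Ici_iff_integrableOn_Ioi]
    exact (exp_neg_integrableOn_Ioi 0 hε).const_mul C
  -- integrability of entries
  have hint : ∀ i j, IntegrableOn (fun t : ℝ => F t i j) (Set.Ici 0) := by
    intro i j
    refine Integrable.mono' hg ((hFcont i j).aestronglyMeasurable) ?_
    refine (ae_restrict_iff' measurableSet_Ici).2 (Filter.Eventually.of_forall fun t ht => ?_)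
    rw [Real.norm_eq_abs]
    exact hbound t ht i j
  -- entrywise convergence to zero
  have htend0 : ∀ i j, Tendsto (fun t => F t i j) atTop (nhds 0) := by
    intro i j
    have hgt : Tendsto (fun t : ℝ => C * Real.exp (-ε * t)) atTop (nhds 0) := by
      rw [show (0:ℝ) = C * 0 from (mul_zero C).symm]
      refine Tendsto.const_mul C ?_
      refine Real.tendsto_exp_atBot.comp ?_
      have h1 : Tendsto (fun t : ℝ => ε * t) atTop atTop :=
        Tendsto.const_mul_atTop hε tendsto_id
      have h2 := tendsto_neg_atTop_atBot.comp h1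
      have : (Neg.neg ∘ fun t : ℝ => ε * t) = fun t : ℝ => -ε * t := by
        funext t; simp [neg_mul]
      rw [this] at h2
      exact h2
    refine squeeze_zero_norm' ?_ hgt
    filter_upwards [Filter.eventually_ge_atTop (0:ℝ)] with t ht
    rw [Real.norm_eq_abs]
    exact hbound t ht i j
  -- full matrix convergence
  have htendF : Tendsto F atTop (nhds 0) := by
    refine tendsto_pi_nhds.2 fun i => tendsto_pi_nhds.2 fun j => ?_
    simpa using htend0 i j
  -- derivative of entries
  have hderiv : ∀ i j, ∀ x : ℝ, HasDerivAt (fun t => F t i j) ((K * F x) i j) x := by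
    intro i j x
    letI : SeminormedRing (Matrix (Fin n) (Fin n) ℝ) := Matrix.linftyOpSemiNormedRing
    letI : NormedRing (Matrix (Fin n) (Fin n) ℝ) := Matrix.linftyOpNormedRing
    letI : NormedAlgebra ℝ (Matrix (Fin n) (Fin n) ℝ) := Matrix.linftyOpNormedAlgebra
    let Lij : Matrix (Fin n) (Fin n) ℝ →ₗ[ℝ] ℝ :=
      { toFun := fun A => A i j
        map_add' := fun _ _ => rfl
        map_smul' := fun _ _ => rfl }
    have hd : HasDerivAt F (K * F x) x := hasDerivAt_exp_smul_const' (𝕂 := ℝ) K x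
    exact (Lij.toContinuousLinearMap.hasFDerivAt.comp_hasDerivAt x hd :)
  -- value at 0
  have hF0 : F 0 = 1 := by
    rw [hF]
    simp only [zero_smul]
    exact NormedSpace.exp_zero
  -- the integral identity
  set J : Matrix (Fin n) (Fin n) ℝ :=
    Matrix.of (fun i j => ∫ t in Set.Ici (0:ℝ), F t i j) with hJ
  have hKJ : K * J = -1 := by
    ext i j
    rw [Matrix.mul_apply]
    have hJD : ∀ k, J k j = ∫ t in Set.Ici (0:ℝ), F t k j := fun k => rfl
    have h1 : ∑ k, K i k * J k j = ∑ k, ∫ t in Set.Ici (0:ℝ), K i k * F t k j := by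
      refine Finset.sum_congr rfl fun k _ => ?_
      rw [hJD, MeasureTheory.integral_const_mul]
    rw [h1, ← MeasureTheory.integral_finset_sum _
      (fun k _ => ((hint k j).const_mul (K i k)))]
    have h2 : ∀ t : ℝ, ∑ k, K i k * F t k j = (K * F t) i j := fun t =>
      (Matrix.mul_apply).symm
    rw [show (fun t => ∑ k, K i k * F t k j) = fun t => (K * F t) i j from funext h2]
    have h3 : IntegrableOn (fun t => (K * F t) i j) (Set.Ioi (0:ℝ)) := by
      rw [show (fun t => (K * F t) i j) = fun t => ∑ k, K i k * F t k j from
        funext fun t => (h2 t).symm]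
      exact IntegrableOn.mono_set
        (integrable_finset_sum _ fun k _ => ((hint k j).const_mul (K i k)))
        Set.Ioi_subset_Ici_self
    rw [MeasureTheory.integral_Ici_eq_integral_Ioi,
      integral_Ioi_of_hasDerivAt_of_tendsto' (fun x _ => hderiv i j x) h3 (htend0 i j)]
    rw [hF0]
    simp
  have hJval : J = -K⁻¹ := by
    have h := Matrix.inv_eq_right_inv (show K * (-J) = 1 by rw [Matrix.mul_neg, hKJ, neg_neg])
    rw [h, neg_neg]
  exact ⟨hdet, hint, hJval, htendF⟩
end

section
/- Let K be a real n×n matrix, let v be a column vector and u a row vector with u K = 0, and let G be a real n×n matrix (the group inverse −K^# in the paper's notation, up to sign) satisfying G K = I − v u. Then for every x ≥ 0, ∫₀^x e^{Ku} du = −G(I − e^{Kx}) + x·(v u). In particular, if K has a semisimple zero eigenvalue with normalized right eigenvector v and left eigenvector u and group inverse K^#, then 𝓕(K,x) = (−K^#)(I − e^{Kx}) + x v uᵀ. -/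
open Matrix MeasureTheory

attribute [local instance] Matrix.linftyOpNormedRing Matrix.linftyOpNormedAlgebra

open NormedSpace in
/-- If `B * A = 0`, then `B * exp A = B`. -/
lemma mul_exp_of_mul_eq_zero {n : ℕ} (A B : Matrix (Fin n) (Fin n) ℝ)
    (h : B * A = 0) : B * NormedSpace.exp A = B := by
  rw [NormedSpace.exp_eq_tsum ℝ]
  have hsum : Summable fun k : ℕ => (k.factorial : ℝ)⁻¹ • A ^ k :=
    NormedSpace.expSeries_summable' (𝕂 := ℝ) A
  have := hsum.hasSum.mul_left B
  rw [← (this.tsum_eq)]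
  have h0 : ∀ k : ℕ, k ≠ 0 → B * ((k.factorial : ℝ)⁻¹ • A ^ k) = 0 := by
    intro k hk
    obtain ⟨m, rfl⟩ := Nat.exists_eq_succ_of_ne_zero hk
    rw [Matrix.mul_smul, pow_succ', ← Matrix.mul_assoc, h, Matrix.zero_mul, smul_zero]
  rw [tsum_eq_single 0 h0]
  simp

/-- Let `K` be a matrix, `v` a column vector, `u` a row vector with `u K = 0`, and `G` a
matrix with `G K = I - v u`.  Then for every `x ≥ 0`,
`∫₀^x e^{Ks} ds = -G (I - e^{Kx}) + x (v u)`.  (In the paper, `G = K^#` is the group inverse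
of `K` when `K` has a semisimple zero eigenvalue with right eigenvector `v` and left
eigenvector `u`.) -/
theorem stmt_11 {n : ℕ} (K : Matrix (Fin n) (Fin n) ℝ) (v u : Fin n → ℝ)
    (hu : Matrix.vecMul u K = 0) (G : Matrix (Fin n) (Fin n) ℝ)
    (hG : G * K = 1 - Matrix.vecMulVec v u) :
    ∀ x : ℝ, 0 ≤ x →
      (Matrix.of fun i j => ∫ s in (0 : ℝ)..x, (NormedSpace.exp (s • K)) i j) =
        -(G * (1 - NormedSpace.exp (x • K))) + x • Matrix.vecMulVec v u := by
  intro x hx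
  have hvuK : Matrix.vecMulVec v u * K = 0 := by
    ext i j
    simp [Matrix.mul_apply, Matrix.vecMulVec_apply, mul_assoc, ← Finset.mul_sum]
    have := congrFun hu j
    simp [Matrix.vecMul, dotProduct] at this
    simp [this]
  have hvuexp : ∀ s : ℝ, Matrix.vecMulVec v u * NormedSpace.exp (s • K)
      = Matrix.vecMulVec v u := by
    intro s
    apply mul_exp_of_mul_eq_zero
    rw [Matrix.mul_smul, hvuK, smul_zero]
  -- the antiderivative
  set F : ℝ → Matrix (Fin n) (Fin n) ℝ :=
    fun s => -(G * (1 - NormedSpace.exp (s • K))) + s • Matrix.vecMulVec v u with hF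
  have hderiv : ∀ s : ℝ, HasDerivAt F (NormedSpace.exp (s • K)) s := by
    intro s
    have h1 : HasDerivAt (fun t : ℝ => NormedSpace.exp (t • K))
        (K * NormedSpace.exp (s • K)) s := hasDerivAt_exp_smul_const' K s
    have h2 : HasDerivAt (fun t : ℝ => -(G * (1 - NormedSpace.exp (t • K))))
        (G * (K * NormedSpace.exp (s • K))) s := by
      have : HasDerivAt (fun t : ℝ => G * (1 - NormedSpace.exp (t • K)))
          (G * (0 - K * NormedSpace.exp (s • K))) s :=
        (((hasDerivAt_const s (1 : Matrix (Fin n) (Fin n) ℝ)).sub h1).const_mul G)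
      have h := this.neg
      simp only [mul_neg, zero_sub, neg_neg] at h
      exact h
    have h3 : HasDerivAt (fun t : ℝ => t • Matrix.vecMulVec v u)
        (Matrix.vecMulVec v u) s := by
      have h := (hasDerivAt_id s).smul_const (Matrix.vecMulVec v u)
      simp only [one_smul] at h
      exact h
    have := h2.add h3
    refine this.congr_deriv ?_
    rw [← Matrix.mul_assoc, hG, Matrix.sub_mul, Matrix.one_mul]
    rw [hvuexp s]
    abel
  ext i j
  simp only [Matrix.of_apply]
  have key : ∫ s in (0:ℝ)..x, (NormedSpace.exp (s • K)) i j = F x i j - F 0 i j := by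
    apply intervalIntegral.integral_eq_sub_of_hasDerivAt
    · intro s _
      exact ((Matrix.entryLinearMap ℝ ℝ i j).toContinuousLinearMap.hasFDerivAt).comp_hasDerivAt
        s (hderiv s)
    · apply Continuous.intervalIntegrable
      exact (NormedSpace.exp_continuous.comp (continuous_id.smul continuous_const)).matrix_elem i j
  rw [key, hF]
  simp [Matrix.add_apply]
end

section
/- Let Q be a real n×n matrix, α a row vector and 𝟙 the all-ones column vector, with Q𝟙 = 0, αQ = 0 and α𝟙 = 1. Suppose that e^{Qt} → 𝟙α as t → ∞ and that t ↦ e^{Qt} − 𝟙α is (entrywise) integrable on [0,∞). Then the matrix D = ∫₀^∞ (e^{Qt} − 𝟙α) dt satisfies Q D = D Q = 𝟙α − I, D𝟙 = 0 and αD = 0; consequently Q(−D)Q = Q, (−D)Q(−D) = −D and Q(−D) = (−D)Q, i.e., −D is the group inverse Q^# of Q. -/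
open Matrix MeasureTheory

noncomputable def entryLM {n : ℕ} (i j : Fin n) : Matrix (Fin n) (Fin n) ℝ →ₗ[ℝ] ℝ where
  toFun M := M i j
  map_add' _ _ := rfl
  map_smul' _ _ := rfl

noncomputable def mulVecLM {n : ℕ} (v : Fin n → ℝ) (i : Fin n) :
    Matrix (Fin n) (Fin n) ℝ →ₗ[ℝ] ℝ where
  toFun M := (M *ᵥ v) i
  map_add' M N := by simp [Matrix.add_mulVec]
  map_smul' c M := by simp [Matrix.smul_mulVec]

noncomputable def vecMulLM {n : ℕ} (v : Fin n → ℝ) (j : Fin n) :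
    Matrix (Fin n) (Fin n) ℝ →ₗ[ℝ] ℝ where
  toFun M := (Matrix.vecMul v M) j
  map_add' M N := by simp [Matrix.vecMul_add]
  map_smul' c M := by
    simp [Matrix.vecMul, dotProduct, Finset.mul_sum, mul_left_comm]

theorem aux_hasDerivAt {n : ℕ} (Q : Matrix (Fin n) (Fin n) ℝ) {E : Type*}
    [NormedAddCommGroup E] [NormedSpace ℝ E]
    (L : Matrix (Fin n) (Fin n) ℝ →ₗ[ℝ] E) (t : ℝ) :
    HasDerivAt (fun u : ℝ => L (NormedSpace.exp (u • Q)))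
      (L (NormedSpace.exp (t • Q) * Q)) t ∧
    HasDerivAt (fun u : ℝ => L (NormedSpace.exp (u • Q)))
      (L (Q * NormedSpace.exp (t • Q))) t := by
  letI : SeminormedRing (Matrix (Fin n) (Fin n) ℝ) := Matrix.linftyOpSemiNormedRing
  letI : NormedRing (Matrix (Fin n) (Fin n) ℝ) := Matrix.linftyOpNormedRing
  letI : NormedAlgebra ℝ (Matrix (Fin n) (Fin n) ℝ) := Matrix.linftyOpNormedAlgebra
  haveI : CompleteSpace (Matrix (Fin n) (Fin n) ℝ) := FiniteDimensional.complete ℝ _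
  have h1 := hasDerivAt_exp_smul_const (𝕂 := ℝ) Q t
  have h2 := hasDerivAt_exp_smul_const' (𝕂 := ℝ) Q t
  exact ⟨(L.toContinuousLinearMap.hasFDerivAt.comp_hasDerivAt t h1 :),
    (L.toContinuousLinearMap.hasFDerivAt.comp_hasDerivAt t h2 :)⟩

theorem exp_mulVec_one {n : ℕ} (Q : Matrix (Fin n) (Fin n) ℝ)
    (hQ1 : Q *ᵥ (fun _ => (1 : ℝ)) = 0) (t : ℝ) :
    NormedSpace.exp (t • Q) *ᵥ (fun _ => (1 : ℝ)) = (fun _ => (1 : ℝ)) := by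
  funext i
  have hconst : ∀ s : ℝ, (NormedSpace.exp (s • Q) *ᵥ (fun _ => (1:ℝ))) i
      = (NormedSpace.exp ((0:ℝ) • Q) *ᵥ (fun _ => (1:ℝ))) i := by
    intro s
    have hd : ∀ u : ℝ, HasDerivAt
        (fun u : ℝ => (mulVecLM (fun _ => (1:ℝ)) i) (NormedSpace.exp (u • Q))) 0 u := by
      intro u
      have := (aux_hasDerivAt Q (mulVecLM (fun _ => (1:ℝ)) i) u).1
      convert this using 1
      show (0:ℝ) = ((NormedSpace.exp (u • Q) * Q) *ᵥ (fun _ => (1:ℝ))) i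
      rw [← Matrix.mulVec_mulVec, hQ1]
      simp [Matrix.mulVec_zero]
      all_goals rfl
    exact is_const_of_deriv_eq_zero (fun x => (hd x).differentiableAt)
      (fun x => (hd x).deriv) s 0
  rw [show ((NormedSpace.exp (t • Q) *ᵥ fun _ => (1:ℝ)) i) = _ from hconst t]
  simp [NormedSpace.exp_zero, Matrix.one_mulVec]

theorem vecMul_exp {n : ℕ} (Q : Matrix (Fin n) (Fin n) ℝ) (α : Fin n → ℝ)
    (hαQ : Matrix.vecMul α Q = 0) (t : ℝ) :
    Matrix.vecMul α (NormedSpace.exp (t • Q)) = α := by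
  funext j
  have hconst : ∀ s : ℝ, (Matrix.vecMul α (NormedSpace.exp (s • Q))) j
      = (Matrix.vecMul α (NormedSpace.exp ((0:ℝ) • Q))) j := by
    intro s
    have hd : ∀ u : ℝ, HasDerivAt
        (fun u : ℝ => (vecMulLM α j) (NormedSpace.exp (u • Q))) 0 u := by
      intro u
      have := (aux_hasDerivAt Q (vecMulLM α j) u).2
      convert this using 1
      show (0:ℝ) = (Matrix.vecMul α (Q * NormedSpace.exp (u • Q))) j
      rw [← Matrix.vecMul_vecMul, hαQ]
      simp [Matrix.zero_vecMul]
      all_goals rfl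
    exact is_const_of_deriv_eq_zero (fun x => (hd x).differentiableAt)
      (fun x => (hd x).deriv) s 0
  rw [show ((Matrix.vecMul α (NormedSpace.exp (t • Q))) j) = _ from hconst t]
  simp [NormedSpace.exp_zero, Matrix.vecMul_one]

/-- Let `Q` be a matrix with `Q 𝟙 = 0`, `α Q = 0`, `α 𝟙 = 1`, such that `e^{Qt} → 𝟙 α` as
`t → ∞` and `t ↦ e^{Qt} - 𝟙 α` is entrywise integrable on `[0,∞)`.  Then the deviation matrix
`D = ∫₀^∞ (e^{Qt} - 𝟙 α) dt` satisfies `Q D = D Q = 𝟙 α - I`, `D 𝟙 = 0`, `α D = 0`, and `-D`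
is the group inverse of `Q`: `Q (-D) Q = Q`, `(-D) Q (-D) = -D`, `Q (-D) = (-D) Q`. -/
theorem stmt_12 {n : ℕ} (Q : Matrix (Fin n) (Fin n) ℝ) (α : Fin n → ℝ)
    (hQ1 : Q *ᵥ (fun _ => (1 : ℝ)) = 0) (hαQ : Matrix.vecMul α Q = 0)
    (hα1 : α ⬝ᵥ (fun _ => (1 : ℝ)) = 1)
    (hlim : Filter.Tendsto (fun t : ℝ => NormedSpace.exp (t • Q)) Filter.atTop
      (nhds (Matrix.vecMulVec (fun _ => (1 : ℝ)) α)))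
    (hint : ∀ i j, IntegrableOn (fun t : ℝ =>
      ((NormedSpace.exp (t • Q) - Matrix.vecMulVec (fun _ => (1 : ℝ)) α :
        Matrix (Fin n) (Fin n) ℝ)) i j) (Set.Ici 0))
    (D : Matrix (Fin n) (Fin n) ℝ)
    (hD : D = Matrix.of fun i j => ∫ t in Set.Ici (0 : ℝ),
      ((NormedSpace.exp (t • Q) - Matrix.vecMulVec (fun _ => (1 : ℝ)) α :
        Matrix (Fin n) (Fin n) ℝ)) i j) :
    Q * D = Matrix.vecMulVec (fun _ => (1 : ℝ)) α - 1 ∧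
    D * Q = Matrix.vecMulVec (fun _ => (1 : ℝ)) α - 1 ∧
    D *ᵥ (fun _ => (1 : ℝ)) = 0 ∧
    Matrix.vecMul α D = 0 ∧
    Q * (-D) * Q = Q ∧ (-D) * Q * (-D) = -D ∧ Q * (-D) = (-D) * Q := by
  set P : Matrix (Fin n) (Fin n) ℝ := Matrix.vecMulVec (fun _ => (1 : ℝ)) α with hP
  have hPapp : ∀ i j, P i j = α j := by
    intro i j; simp [hP, Matrix.vecMulVec_apply]
  have hsumQ : ∀ i, ∑ k, Q i k = 0 := by
    intro i
    have := congrFun hQ1 i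
    simpa [Matrix.mulVec, dotProduct] using this
  have hsumα : ∑ k, α k = 1 := by
    simpa [dotProduct] using hα1
  have hαQ' : ∀ j, ∑ k, α k * Q k j = 0 := by
    intro j
    have := congrFun hαQ j
    simpa [Matrix.vecMul, dotProduct] using this
  -- entrywise limits
  have hlim' : ∀ i j, Filter.Tendsto (fun t : ℝ => (NormedSpace.exp (t • Q)) i j)
      Filter.atTop (nhds (P i j)) := by
    intro i j
    have hc : Continuous fun M : Matrix (Fin n) (Fin n) ℝ => M i j :=
      (continuous_apply j).comp (continuous_apply i)
    exact (hc.tendsto P).comp hlim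
  -- D entries
  have hDe : ∀ i j, D i j = ∫ t in Set.Ici (0:ℝ),
      ((NormedSpace.exp (t • Q) - P) i j) := by
    intro i j; rw [hD]; rfl
  -- integrability on Ioi
  have hint' : ∀ i j, IntegrableOn (fun t : ℝ =>
      ((NormedSpace.exp (t • Q) - P) i j)) (Set.Ioi 0) := by
    intro i j; exact (hint i j).mono_set Set.Ioi_subset_Ici_self
  -- key integral: left multiplication by Q
  have keyQ : ∀ i j, ∫ t in Set.Ici (0:ℝ), (Q * NormedSpace.exp (t • Q)) i j
      = P i j - (1 : Matrix (Fin n) (Fin n) ℝ) i j := by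
    intro i j
    have hfun : (fun t : ℝ => (Q * NormedSpace.exp (t • Q)) i j)
        = fun t : ℝ => ∑ k, Q i k * ((NormedSpace.exp (t • Q) - P) k j) := by
      funext t
      have : ∑ k, Q i k * P k j = 0 := by
        simp only [hPapp]
        rw [← Finset.sum_mul, hsumQ, zero_mul]
      simp only [Matrix.sub_apply, mul_sub, Finset.sum_sub_distrib, this, sub_zero,
        Matrix.mul_apply]
    have hit : IntegrableOn (fun t : ℝ => (Q * NormedSpace.exp (t • Q)) i j)
        (Set.Ioi 0) := by
      rw [hfun]
      exact integrable_finset_sum _ (fun k _ => (hint' k j).const_mul _)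
    have hderiv : ∀ t ∈ Set.Ici (0:ℝ), HasDerivAt
        (fun u : ℝ => (NormedSpace.exp (u • Q)) i j)
        ((Q * NormedSpace.exp (t • Q)) i j) t :=
      fun t _ => (aux_hasDerivAt Q (entryLM i j) t).2
    rw [MeasureTheory.integral_Ici_eq_integral_Ioi]
    rw [integral_Ioi_of_hasDerivAt_of_tendsto' hderiv hit (hlim' i j)]
    congr 1
    simp [NormedSpace.exp_zero]
  -- key integral: right multiplication by Q
  have keyQ' : ∀ i j, ∫ t in Set.Ici (0:ℝ), (NormedSpace.exp (t • Q) * Q) i j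
      = P i j - (1 : Matrix (Fin n) (Fin n) ℝ) i j := by
    intro i j
    have hfun : (fun t : ℝ => (NormedSpace.exp (t • Q) * Q) i j)
        = fun t : ℝ => ∑ k, ((NormedSpace.exp (t • Q) - P) i k) * Q k j := by
      funext t
      have : ∑ k, P i k * Q k j = 0 := by
        simp only [hPapp]; exact hαQ' j
      simp only [Matrix.sub_apply, sub_mul, Finset.sum_sub_distrib, this, sub_zero,
        Matrix.mul_apply]
    have hit : IntegrableOn (fun t : ℝ => (NormedSpace.exp (t • Q) * Q) i j)
        (Set.Ioi 0) := by
      rw [hfun]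
      exact integrable_finset_sum _ (fun k _ => (hint' i k).mul_const _)
    have hderiv : ∀ t ∈ Set.Ici (0:ℝ), HasDerivAt
        (fun u : ℝ => (NormedSpace.exp (u • Q)) i j)
        ((NormedSpace.exp (t • Q) * Q) i j) t :=
      fun t _ => (aux_hasDerivAt Q (entryLM i j) t).1
    rw [MeasureTheory.integral_Ici_eq_integral_Ioi]
    rw [integral_Ioi_of_hasDerivAt_of_tendsto' hderiv hit (hlim' i j)]
    congr 1
    simp [NormedSpace.exp_zero]
  -- Q * D = P - 1
  have hQD : Q * D = P - 1 := by
    ext i j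
    rw [Matrix.mul_apply]
    have : ∀ k, Q i k * D k j
        = ∫ t in Set.Ici (0:ℝ), Q i k * ((NormedSpace.exp (t • Q) - P) k j) := by
      intro k; rw [hDe k j, MeasureTheory.integral_const_mul]
    rw [Finset.sum_congr rfl (fun k _ => this k),
      ← MeasureTheory.integral_finset_sum _ (fun k _ => (hint k j).const_mul _)]
    have hfun : (fun t : ℝ => ∑ k, Q i k * ((NormedSpace.exp (t • Q) - P) k j))
        = fun t : ℝ => (Q * NormedSpace.exp (t • Q)) i j := by
      funext t
      have : ∑ k, Q i k * P k j = 0 := by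
        simp only [hPapp]
        rw [← Finset.sum_mul, hsumQ, zero_mul]
      simp only [Matrix.sub_apply, mul_sub, Finset.sum_sub_distrib, this, sub_zero,
        Matrix.mul_apply]
    rw [hfun, keyQ i j]
    simp
  -- D * Q = P - 1
  have hDQ : D * Q = P - 1 := by
    ext i j
    rw [Matrix.mul_apply]
    have : ∀ k, D i k * Q k j
        = ∫ t in Set.Ici (0:ℝ), ((NormedSpace.exp (t • Q) - P) i k) * Q k j := by
      intro k; rw [hDe i k, MeasureTheory.integral_mul_const]
    rw [Finset.sum_congr rfl (fun k _ => this k),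
      ← MeasureTheory.integral_finset_sum _ (fun k _ => (hint i k).mul_const _)]
    have hfun : (fun t : ℝ => ∑ k, ((NormedSpace.exp (t • Q) - P) i k) * Q k j)
        = fun t : ℝ => (NormedSpace.exp (t • Q) * Q) i j := by
      funext t
      have : ∑ k, P i k * Q k j = 0 := by
        simp only [hPapp]; exact hαQ' j
      simp only [Matrix.sub_apply, sub_mul, Finset.sum_sub_distrib, this, sub_zero,
        Matrix.mul_apply]
    rw [hfun, keyQ' i j]
    simp
  -- D 𝟙 = 0
  have hD1 : D *ᵥ (fun _ => (1 : ℝ)) = 0 := by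
    funext i
    show (∑ j, D i j * 1) = 0
    have : ∀ j, D i j * 1
        = ∫ t in Set.Ici (0:ℝ), ((NormedSpace.exp (t • Q) - P) i j) := by
      intro j; rw [mul_one, hDe i j]
    rw [Finset.sum_congr rfl (fun j _ => this j),
      ← MeasureTheory.integral_finset_sum _ (fun j _ => hint i j)]
    have hfun : (fun t : ℝ => ∑ j, ((NormedSpace.exp (t • Q) - P) i j))
        = fun _ : ℝ => (0:ℝ) := by
      funext t
      have h1 : ∑ j, (NormedSpace.exp (t • Q)) i j = 1 := by
        have := congrFun (exp_mulVec_one Q hQ1 t) i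
        simpa [Matrix.mulVec, dotProduct] using this
      have h2 : ∑ j, P i j = 1 := by
        simp only [hPapp]; exact hsumα
      simp [Matrix.sub_apply, Finset.sum_sub_distrib, h1, h2]
    rw [hfun]
    simp
  -- α D = 0
  have hαD : Matrix.vecMul α D = 0 := by
    funext j
    show (∑ i, α i * D i j) = 0
    have : ∀ i, α i * D i j
        = ∫ t in Set.Ici (0:ℝ), α i * ((NormedSpace.exp (t • Q) - P) i j) := by
      intro i; rw [hDe i j, MeasureTheory.integral_const_mul]
    rw [Finset.sum_congr rfl (fun i _ => this i),
      ← MeasureTheory.integral_finset_sum _ (fun i _ => (hint i j).const_mul _)]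
    have hfun : (fun t : ℝ => ∑ i, α i * ((NormedSpace.exp (t • Q) - P) i j))
        = fun _ : ℝ => (0:ℝ) := by
      funext t
      have h1 : ∑ i, α i * (NormedSpace.exp (t • Q)) i j = α j := by
        have := congrFun (vecMul_exp Q α hαQ t) j
        simpa [Matrix.vecMul, dotProduct] using this
      have h2 : ∑ i, α i * P i j = α j := by
        simp only [hPapp]
        rw [← Finset.sum_mul, hsumα, one_mul]
      simp [Matrix.sub_apply, mul_sub, Finset.sum_sub_distrib, h1, h2]
    rw [hfun]
    simp
  -- P * Q = 0 and P * D = 0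
  have hPQ : P * Q = 0 := by
    ext i j
    rw [Matrix.mul_apply]
    simp only [hPapp]
    simpa using hαQ' j
  have hPD : P * D = 0 := by
    ext i j
    rw [Matrix.mul_apply]
    simp only [hPapp]
    have := congrFun hαD j
    simpa [Matrix.vecMul, dotProduct] using this
  refine ⟨hQD, hDQ, hD1, hαD, ?_, ?_, ?_⟩
  · rw [Matrix.mul_neg, hQD, Matrix.neg_mul, sub_mul, hPQ]
    simp
  · have h : (-D) * Q * (-D) = (D * Q) * D := by
      rw [Matrix.neg_mul, Matrix.mul_neg, Matrix.neg_mul, neg_neg]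
    rw [h, hDQ, sub_mul, hPD]
    simp
  · rw [Matrix.mul_neg, Matrix.neg_mul, hQD, hDQ]
end

section
/- Let A be a real n×n matrix, v a column vector and η a row vector with A v = 0, η A = 0 and η v = 1, and let G be a real n×n matrix with G A = A G = I − v η and G v = 0. Let β be a column vector with η β ≠ 0, let 𝒰 be a real k×n matrix with 𝒰 v = 0, and let h be a real k-dimensional column vector. Then there is a unique real k×n matrix X satisfying X A = 𝒰 and X β = h, and it is given by X = 𝒰 G + w η, where w = (η β)⁻¹ (h − 𝒰 G β). -/
open Matrix

lemma mul_vecMulVec' {k n : ℕ} (M : Matrix (Fin k) (Fin n) ℝ) (v η : Fin n → ℝ) :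
    M * vecMulVec v η = vecMulVec (M *ᵥ v) η := by
  ext i j
  simp [Matrix.mul_apply, vecMulVec_apply, mulVec, dotProduct, Finset.sum_mul, mul_assoc]

lemma vecMulVec_mul' {k n : ℕ} (w : Fin k → ℝ) (η : Fin n → ℝ) (A : Matrix (Fin n) (Fin n) ℝ) :
    vecMulVec w η * A = vecMulVec w (vecMul η A) := by
  ext i j
  simp [Matrix.mul_apply, vecMulVec_apply, vecMul, dotProduct, Finset.mul_sum, mul_assoc]

lemma vecMulVec_mulVec' {k n : ℕ} (w : Fin k → ℝ) (η β : Fin n → ℝ) :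
    vecMulVec w η *ᵥ β = (η ⬝ᵥ β) • w := by
  ext i
  simp only [mulVec, vecMulVec_apply, dotProduct, smul_eq_mul, Pi.smul_apply, Finset.sum_mul, Finset.mul_sum]
  exact Finset.sum_congr rfl fun x _ => by ring

/-- Linear-algebraic core of the zero-drift escape-probability formula: with `A v = 0`,
`η A = 0`, `η v = 1`, a matrix `G` with `G A = A G = I - v η` and `G v = 0`, a vector `β`
with `η β ≠ 0`, a matrix `𝒰` with `𝒰 v = 0` and a vector `h`, there is a unique matrix `X`
with `X A = 𝒰` and `X β = h`, namely `X = 𝒰 G + w η` where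
`w = (η β)⁻¹ (h - 𝒰 G β)`. -/
theorem stmt_13 {n k : ℕ} (A : Matrix (Fin n) (Fin n) ℝ) (v η : Fin n → ℝ)
    (hAv : A *ᵥ v = 0) (hηA : Matrix.vecMul η A = 0) (hηv : η ⬝ᵥ v = 1)
    (G : Matrix (Fin n) (Fin n) ℝ)
    (hGA : G * A = 1 - Matrix.vecMulVec v η) (hAG : A * G = 1 - Matrix.vecMulVec v η)
    (hGv : G *ᵥ v = 0)
    (β : Fin n → ℝ) (hβ : η ⬝ᵥ β ≠ 0)
    (U : Matrix (Fin k) (Fin n) ℝ) (hUv : U *ᵥ v = 0) (h : Fin k → ℝ) :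
    (∃! X : Matrix (Fin k) (Fin n) ℝ, X * A = U ∧ X *ᵥ β = h) ∧
    ∀ X : Matrix (Fin k) (Fin n) ℝ, X * A = U → X *ᵥ β = h →
      X = U * G + Matrix.vecMulVec ((η ⬝ᵥ β)⁻¹ • (h - (U * G) *ᵥ β)) η := by
  set w : Fin k → ℝ := (η ⬝ᵥ β)⁻¹ • (h - (U * G) *ᵥ β) with hw
  set X₀ : Matrix (Fin k) (Fin n) ℝ := U * G + vecMulVec w η with hX₀
  -- X₀ satisfies the equations
  have h1 : X₀ * A = U := by
    rw [hX₀, Matrix.add_mul, Matrix.mul_assoc, hGA, vecMulVec_mul', hηA,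
      Matrix.mul_sub, Matrix.mul_one, mul_vecMulVec', hUv]
    ext i j; simp [vecMulVec_apply]
  have h2 : X₀ *ᵥ β = h := by
    rw [hX₀, Matrix.add_mulVec, vecMulVec_mulVec', hw, smul_smul,
      mul_inv_cancel₀ hβ, one_smul]
    ext i; simp
  -- uniqueness
  have huniq : ∀ X : Matrix (Fin k) (Fin n) ℝ, X * A = U → X *ᵥ β = h → X = X₀ := by
    intro X hXA hXβ
    have key : X = U * G + vecMulVec (X *ᵥ v) η := by
      have : X * (A * G) = U * G := by rw [← Matrix.mul_assoc, hXA]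
      rw [hAG, Matrix.mul_sub, Matrix.mul_one, mul_vecMulVec', sub_eq_iff_eq_add] at this
      linear_combination (norm := abel) this
    have hXv : X *ᵥ v = w := by
      have hβeq : (U * G) *ᵥ β + (η ⬝ᵥ β) • (X *ᵥ v) = h := by
        rw [← vecMulVec_mulVec' (X *ᵥ v) η β, ← Matrix.add_mulVec, ← key, hXβ]
      rw [hw]
      have : (η ⬝ᵥ β) • (X *ᵥ v) = h - (U * G) *ᵥ β := by
        rw [← hβeq]; abel
      rw [← this, smul_smul, inv_mul_cancel₀ hβ, one_smul]
    rw [key, hXv]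
  refine ⟨⟨X₀, ⟨h1, h2⟩, fun X ⟨hXA, hXβ⟩ => huniq X hXA hXβ⟩, fun X hXA hXβ => huniq X hXA hXβ⟩
end

section
/- Let M₁ be an entrywise nonnegative real m×n matrix all of whose row sums are at most c for some constant c < 1, and let M₂ be an entrywise nonnegative real n×m matrix all of whose row sums are at most 1. Let P = [[0, M₁], [M₂, 0]]. Then the series ∑_{ν=0}^∞ (−1)^ν P^ν converges, I + P is invertible, and (I + P)⁻¹ = ∑_{ν=0}^∞ (−1)^ν P^ν. -/
open Matrix

section AuxNorm

attribute [local instance]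
  Matrix.linftyOpNormedAddCommGroup Matrix.linftyOpNormedRing Matrix.linftyOpNormedAlgebra

private lemma aux_norm_le {ι : Type*} [Fintype ι] (A : Matrix ι ι ℝ) {r : ℝ} (hr : 0 ≤ r)
    (h : ∀ i, ∑ j, |A i j| ≤ r) : ‖A‖ ≤ r := by
  rw [Matrix.linfty_opNorm_def]
  have : ((Finset.univ : Finset ι).sup fun i : ι => ∑ j : ι, ‖A i j‖₊ : NNReal) ≤ ⟨r, hr⟩ := by
    refine Finset.sup_le fun i _ => ?_
    have := h i
    exact NNReal.coe_le_coe.mp (show ((∑ j, ‖A i j‖₊ : NNReal) : ℝ) ≤ r by simpa [NNReal.coe_sum, Real.norm_eq_abs] using this)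
  exact_mod_cast this

end AuxNorm

/-- If `M₁ ≥ 0` has all row sums at most `c < 1` and `M₂ ≥ 0` has all row sums at most `1`,
then for `P = [[0, M₁], [M₂, 0]]` the series `∑ (-1)^ν P^ν` converges, `I + P` is invertible,
and the sum of the series is `(I + P)⁻¹`. -/
theorem stmt_15 {m n : ℕ} (M₁ : Matrix (Fin m) (Fin n) ℝ) (M₂ : Matrix (Fin n) (Fin m) ℝ)
    (c : ℝ) (hc : c < 1)
    (h₁nonneg : ∀ i j, 0 ≤ M₁ i j) (h₁row : ∀ i, ∑ j, M₁ i j ≤ c)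
    (h₂nonneg : ∀ i j, 0 ≤ M₂ i j) (h₂row : ∀ i, ∑ j, M₂ i j ≤ 1) :
    IsUnit (1 + Matrix.fromBlocks 0 M₁ M₂ 0 :
      Matrix (Fin m ⊕ Fin n) (Fin m ⊕ Fin n) ℝ).det ∧
    HasSum (fun ν : ℕ => (-1 : ℝ) ^ ν •
        (Matrix.fromBlocks 0 M₁ M₂ 0 : Matrix (Fin m ⊕ Fin n) (Fin m ⊕ Fin n) ℝ) ^ ν)
      (1 + Matrix.fromBlocks 0 M₁ M₂ 0 : Matrix (Fin m ⊕ Fin n) (Fin m ⊕ Fin n) ℝ)⁻¹ := by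
  letI := Matrix.linftyOpNormedRing (n := Fin m ⊕ Fin n) (α := ℝ)
  haveI : CompleteSpace (Matrix (Fin m ⊕ Fin n) (Fin m ⊕ Fin n) ℝ) :=
    inferInstance
  haveI : HasSummableGeomSeries (Matrix (Fin m ⊕ Fin n) (Fin m ⊕ Fin n) ℝ) := by
    letI : NormedSpace ℝ (Matrix (Fin m ⊕ Fin n) (Fin m ⊕ Fin n) ℝ) := Matrix.linftyOpNormedSpace
    exact @instHasSummableGeomSeriesOfCompleteSpace _ _ (FiniteDimensional.complete ℝ _)
  set P : Matrix (Fin m ⊕ Fin n) (Fin m ⊕ Fin n) ℝ := Matrix.fromBlocks 0 M₁ M₂ 0 with hP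
  set c' : ℝ := max c 0 with hc'def
  have hc'0 : 0 ≤ c' := le_max_right _ _
  have hc'1 : c' < 1 := max_lt hc one_pos
  set Q : Matrix (Fin m ⊕ Fin n) (Fin m ⊕ Fin n) ℝ := P ^ 2 with hQ
  have hQblocks : Q = Matrix.fromBlocks (M₁ * M₂) 0 0 (M₂ * M₁) := by
    rw [hQ, hP, sq, Matrix.fromBlocks_multiply]
    simp
  -- norm bound on Q
  have hQnorm : ‖Q‖ < 1 := by
    refine lt_of_le_of_lt (aux_norm_le Q hc'0 ?_) hc'1
    intro i
    rw [hQblocks]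
    rcases i with a | a
    · have : ∑ j : Fin m ⊕ Fin n, |Matrix.fromBlocks (M₁ * M₂) 0 0 (M₂ * M₁) (Sum.inl a) j|
          = ∑ j : Fin m, (M₁ * M₂) a j := by
        rw [Fintype.sum_sum_type]
        simp only [Matrix.fromBlocks_apply₁₁, Matrix.fromBlocks_apply₁₂, Matrix.zero_apply,
          abs_zero, Finset.sum_const_zero, add_zero]
        refine Finset.sum_congr rfl fun j _ => abs_of_nonneg ?_
        rw [Matrix.mul_apply]
        exact Finset.sum_nonneg fun k _ => mul_nonneg (h₁nonneg a k) (h₂nonneg k j)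
      rw [this]
      have : ∑ j : Fin m, (M₁ * M₂) a j = ∑ k : Fin n, M₁ a k * ∑ j : Fin m, M₂ k j := by
        simp_rw [Matrix.mul_apply, Finset.mul_sum]
        exact Finset.sum_comm
      rw [this]
      calc ∑ k : Fin n, M₁ a k * ∑ j : Fin m, M₂ k j
          ≤ ∑ k : Fin n, M₁ a k * 1 :=
            Finset.sum_le_sum fun k _ => mul_le_mul_of_nonneg_left (h₂row k) (h₁nonneg a k)
        _ = ∑ k : Fin n, M₁ a k := by simp
        _ ≤ c := h₁row a
        _ ≤ c' := le_max_left _ _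
    · have : ∑ j : Fin m ⊕ Fin n, |Matrix.fromBlocks (M₁ * M₂) 0 0 (M₂ * M₁) (Sum.inr a) j|
          = ∑ j : Fin n, (M₂ * M₁) a j := by
        rw [Fintype.sum_sum_type]
        simp only [Matrix.fromBlocks_apply₂₁, Matrix.fromBlocks_apply₂₂, Matrix.zero_apply,
          abs_zero, Finset.sum_const_zero, zero_add]
        refine Finset.sum_congr rfl fun j _ => abs_of_nonneg ?_
        rw [Matrix.mul_apply]
        exact Finset.sum_nonneg fun k _ => mul_nonneg (h₂nonneg a k) (h₁nonneg k j)
      rw [this]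
      have : ∑ j : Fin n, (M₂ * M₁) a j = ∑ k : Fin m, M₂ a k * ∑ j : Fin n, M₁ k j := by
        simp_rw [Matrix.mul_apply, Finset.mul_sum]
        exact Finset.sum_comm
      rw [this]
      calc ∑ k : Fin m, M₂ a k * ∑ j : Fin n, M₁ k j
          ≤ ∑ k : Fin m, M₂ a k * c' := by
            refine Finset.sum_le_sum fun k _ => mul_le_mul_of_nonneg_left ?_ (h₂nonneg a k)
            exact le_trans (h₁row k) (le_max_left _ _)
        _ = (∑ k : Fin m, M₂ a k) * c' := (Finset.sum_mul ..).symm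
        _ ≤ 1 * c' := mul_le_mul_of_nonneg_right (h₂row a) hc'0
        _ = c' := one_mul _
  -- geometric series for Q
  have hTsummable : Summable (fun k : ℕ => Q ^ k) := summable_geometric_of_norm_lt_one hQnorm
  set T : Matrix (Fin m ⊕ Fin n) (Fin m ⊕ Fin n) ℝ := ∑' k : ℕ, Q ^ k with hT
  have hTsum : HasSum (fun k : ℕ => Q ^ k) T := hTsummable.hasSum
  have hQT : (1 - Q) * T = 1 := mul_neg_geom_series Q hQnorm
  have hTQ : T * (1 - Q) = 1 := geom_series_mul_neg Q hQnorm
  -- T commutes with P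
  have hPT : P * T = T * P := by
    have h1 : HasSum (fun k : ℕ => P * Q ^ k) (P * T) := hTsum.mul_left P
    have h2 : HasSum (fun k : ℕ => Q ^ k * P) (T * P) := hTsum.mul_right P
    have : (fun k : ℕ => P * Q ^ k) = fun k : ℕ => Q ^ k * P := by
      funext k
      exact (((Commute.refl P).pow_right 2).pow_right k).eq
    rw [this] at h1
    exact h1.unique h2
  -- the series ∑ (-P)^ν
  set S : Matrix (Fin m ⊕ Fin n) (Fin m ⊕ Fin n) ℝ := T + T * (-P) with hS
  have hSsum : HasSum (fun ν : ℕ => (-P) ^ ν) S := by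
    refine HasSum.even_add_odd ?_ ?_
    · have : (fun k : ℕ => (-P) ^ (2 * k)) = fun k : ℕ => Q ^ k := by
        funext k
        rw [pow_mul, neg_sq]
      rw [this]
      exact hTsum
    · have : (fun k : ℕ => (-P) ^ (2 * k + 1)) = fun k : ℕ => Q ^ k * (-P) := by
        funext k
        rw [pow_succ, pow_mul, neg_sq]
      rw [this]
      exact hTsum.mul_right (-P)
  have hSfact : S = T * (1 - P) := by rw [hS, mul_sub, mul_one, mul_neg, sub_eq_add_neg]
  -- S is a two-sided inverse of 1 + P
  have h1PQ : (1 - P) * (1 + P) = 1 - Q := by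
    rw [hQ, sq]; noncomm_ring
  have h1PQ' : (1 + P) * (1 - P) = 1 - Q := by
    rw [hQ, sq]; noncomm_ring
  have hright : (1 + P) * S = 1 := by
    have hcomm : (1 + P) * T = T * (1 + P) := by
      rw [add_mul, mul_add, one_mul, mul_one, hPT]
    rw [hSfact, ← mul_assoc, hcomm, mul_assoc, h1PQ', hTQ]
  have hleft : S * (1 + P) = 1 := by
    rw [hSfact, mul_assoc, h1PQ, hTQ]
  have hunit : IsUnit (1 + P) := ⟨⟨1 + P, S, hright, hleft⟩, rfl⟩
  refine ⟨(Matrix.isUnit_iff_isUnit_det _).mp hunit, ?_⟩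
  have hinv : (1 + P)⁻¹ = S := Matrix.inv_eq_right_inv hright
  rw [hinv]
  have : (fun ν : ℕ => (-1 : ℝ) ^ ν • P ^ ν) = fun ν : ℕ => (-P) ^ ν := by
    funext ν
    rw [← smul_pow, neg_one_smul]
  rw [this]
  exact hSsum
end

section
/- Let M be a real n×n matrix (n ≥ 1) whose off-diagonal entries are all nonnegative. Then M has a real eigenvalue r such that every complex eigenvalue λ of M satisfies Re(λ) ≤ r. -/
open Matrix Polynomial Filter Topology

namespace PF18

section

attribute [local instance] Matrix.linftyOpNormedAddCommGroup Matrix.linftyOpNormedRing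
  Matrix.linftyOpNormedAlgebra Matrix.linftyOpNormedSpace

variable {n : ℕ}


noncomputable def entryCLM (i j : Fin n) : Matrix (Fin n) (Fin n) ℝ →L[ℝ] ℝ :=
  LinearMap.toContinuousLinearMap
    { toFun := fun X => X i j
      map_add' := fun _ _ => rfl
      map_smul' := fun _ _ => rfl }

lemma entryCLM_apply (i j : Fin n) (X : Matrix (Fin n) (Fin n) ℝ) :
    entryCLM i j X = X i j := rfl

lemma mul_entry_nonneg {A B : Matrix (Fin n) (Fin n) ℝ} (hA : ∀ i j, 0 ≤ A i j)
    (hB : ∀ i j, 0 ≤ B i j) : ∀ i j, 0 ≤ (A * B) i j := fun i j => by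
  rw [Matrix.mul_apply]
  exact Finset.sum_nonneg fun k _ => mul_nonneg (hA i k) (hB k j)

lemma pow_entry_nonneg {A : Matrix (Fin n) (Fin n) ℝ} (hA : ∀ i j, 0 ≤ A i j) (k : ℕ) :
    ∀ i j, 0 ≤ (A ^ k) i j := by
  induction k with
  | zero =>
    intro i j
    rw [pow_zero, Matrix.one_apply]
    split <;> norm_num
  | succ m ih =>
    rw [pow_succ]
    exact mul_entry_nonneg ih hA

lemma geom_nonneg {X : Matrix (Fin n) (Fin n) ℝ} (hX : ∀ i j, 0 ≤ X i j) (hlt : ‖X‖ < 1) :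
    ∀ i j, 0 ≤ Ring.inverse (1 - X) i j := by
  intro i j
  have hs : HasSum (fun k => X ^ k) (Ring.inverse (1 - X)) := hasSum_geom_series_inverse X hlt
  have h2 : HasSum (fun k => (X ^ k) i j) (Ring.inverse (1 - X) i j) :=
    hs.map (entryCLM i j).toLinearMap.toAddMonoidHom (entryCLM i j).continuous
  exact h2.nonneg fun k => pow_entry_nonneg hX k i j

/-- The resolvent `(s•1 - A)⁻¹` (as `Ring.inverse`). -/
noncomputable def res (A : Matrix (Fin n) (Fin n) ℝ) (s : ℝ) : Matrix (Fin n) (Fin n) ℝ :=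
  Ring.inverse (s • (1 : Matrix (Fin n) (Fin n) ℝ) - A)

lemma isUnit_of_right_inv {X Q : Matrix (Fin n) (Fin n) ℝ} (hQ : X * Q = 1) : IsUnit X :=
  ⟨⟨X, Q, hQ, mul_eq_one_comm.mp hQ⟩, rfl⟩

lemma res_eq (A : Matrix (Fin n) (Fin n) ℝ) (s : ℝ) {Q : Matrix (Fin n) (Fin n) ℝ}
    (hQ : (s • (1 : Matrix (Fin n) (Fin n) ℝ) - A) * Q = 1) : res A s = Q := by
  let u : (Matrix (Fin n) (Fin n) ℝ)ˣ :=
    ⟨s • (1 : Matrix (Fin n) (Fin n) ℝ) - A, Q, hQ, mul_eq_one_comm.mp hQ⟩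
  show Ring.inverse (u : Matrix (Fin n) (Fin n) ℝ) = Q
  rw [Ring.inverse_unit]
  rfl

lemma step_base (A : Matrix (Fin n) (Fin n) ℝ) (hA : ∀ i j, 0 ≤ A i j) {s : ℝ}
    (hs : ‖A‖ < s) :
    IsUnit (s • (1 : Matrix (Fin n) (Fin n) ℝ) - A) ∧ ∀ i j, 0 ≤ res A s i j := by
  have hs0 : 0 < s := lt_of_le_of_lt (norm_nonneg A) hs
  set X : Matrix (Fin n) (Fin n) ℝ := s⁻¹ • A with hXdef
  have hXn : ‖X‖ < 1 := by
    rw [hXdef, norm_smul, Real.norm_eq_abs, abs_of_pos (inv_pos.mpr hs0)]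
    calc s⁻¹ * ‖A‖ < s⁻¹ * s := by
          exact mul_lt_mul_of_pos_left hs (inv_pos.mpr hs0)
      _ = 1 := inv_mul_cancel₀ hs0.ne'
  have hXpos : ∀ i j, 0 ≤ X i j := fun i j => by
    rw [hXdef, Matrix.smul_apply, smul_eq_mul]
    exact mul_nonneg (inv_nonneg.mpr hs0.le) (hA i j)
  have h1 : s • ((1 : Matrix (Fin n) (Fin n) ℝ) - X) = s • (1 : Matrix (Fin n) (Fin n) ℝ) - A := by
    rw [smul_sub, hXdef, smul_smul, mul_inv_cancel₀ hs0.ne', one_smul]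
  have h2 : ((1 : Matrix (Fin n) (Fin n) ℝ) - X) * Ring.inverse (1 - X) = 1 :=
    Ring.mul_inverse_cancel _ (isUnit_one_sub_of_norm_lt_one hXn)
  have hQ : (s • (1 : Matrix (Fin n) (Fin n) ℝ) - A) * (s⁻¹ • Ring.inverse (1 - X)) = 1 := by
    rw [← h1, smul_mul_assoc, mul_smul_comm, smul_smul, mul_inv_cancel₀ hs0.ne', one_smul, h2]
  refine ⟨isUnit_of_right_inv hQ, fun i j => ?_⟩
  rw [res_eq A s hQ, Matrix.smul_apply, smul_eq_mul]
  exact mul_nonneg (inv_nonneg.mpr hs0.le) (geom_nonneg hXpos hXn i j)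

lemma step_ext (A : Matrix (Fin n) (Fin n) ℝ) {c : ℝ}
    (hc : IsUnit (c • (1 : Matrix (Fin n) (Fin n) ℝ) - A))
    (hRc : ∀ i j, 0 ≤ res A c i j) {s : ℝ}
    (h1 : c - (‖res A c‖ + 1)⁻¹ < s) (h2 : s ≤ c) :
    IsUnit (s • (1 : Matrix (Fin n) (Fin n) ℝ) - A) ∧ ∀ i j, 0 ≤ res A s i j := by
  have hpos : (0:ℝ) < ‖res A c‖ + 1 := by positivity
  set ε : ℝ := c - s with hεdef
  have hε0 : 0 ≤ ε := by simp [hεdef]; linarith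
  have hεlt : ε < (‖res A c‖ + 1)⁻¹ := by rw [hεdef]; linarith
  set X : Matrix (Fin n) (Fin n) ℝ := ε • res A c with hXdef
  have hXn : ‖X‖ < 1 := by
    rw [hXdef, norm_smul, Real.norm_eq_abs, abs_of_nonneg hε0]
    calc ε * ‖res A c‖ ≤ ε * (‖res A c‖ + 1) := by nlinarith
      _ < (‖res A c‖ + 1)⁻¹ * (‖res A c‖ + 1) := by
          exact mul_lt_mul_of_pos_right hεlt hpos
      _ = 1 := inv_mul_cancel₀ hpos.ne'
  have hXpos : ∀ i j, 0 ≤ X i j := fun i j => by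
    rw [hXdef, Matrix.smul_apply, smul_eq_mul]
    exact mul_nonneg hε0 (hRc i j)
  have hcR : (c • (1 : Matrix (Fin n) (Fin n) ℝ) - A) * res A c = 1 :=
    Ring.mul_inverse_cancel _ hc
  have hfac : s • (1 : Matrix (Fin n) (Fin n) ℝ) - A
      = (c • (1 : Matrix (Fin n) (Fin n) ℝ) - A) * ((1 : Matrix (Fin n) (Fin n) ℝ) - X) := by
    rw [mul_sub, mul_one, hXdef, mul_smul_comm, hcR, hεdef]
    ext i j
    by_cases hij : i = j <;>
      simp [Matrix.sub_apply, Matrix.smul_apply, Matrix.one_apply, hij] <;> ring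
  have h2' : ((1 : Matrix (Fin n) (Fin n) ℝ) - X) * Ring.inverse (1 - X) = 1 :=
    Ring.mul_inverse_cancel _ (isUnit_one_sub_of_norm_lt_one hXn)
  have hQ : (s • (1 : Matrix (Fin n) (Fin n) ℝ) - A) * (Ring.inverse (1 - X) * res A c) = 1 := by
    rw [hfac, mul_assoc, ← mul_assoc ((1 : Matrix (Fin n) (Fin n) ℝ) - X), h2', one_mul, hcR]
  refine ⟨isUnit_of_right_inv hQ, fun i j => ?_⟩
  rw [res_eq A s hQ]
  exact mul_entry_nonneg (geom_nonneg hXpos hXn) hRc i j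


lemma res_nonneg_of_ge (A : Matrix (Fin n) (Fin n) ℝ) (hA : ∀ i j, 0 ≤ A i j) {ρ : ℝ}
    (hρ : 0 ≤ ρ)
    (hunit : ∀ s : ℝ, ρ ≤ s → IsUnit (s • (1 : Matrix (Fin n) (Fin n) ℝ) - A)) :
    ∀ i j, 0 ≤ res A ρ i j := by
  set N : ℝ := ‖A‖ + ρ + 1 with hNdef
  have hNA : ‖A‖ < N := by simp only [hNdef]; linarith
  have hρN : ρ ≤ N := by simp only [hNdef]; linarith [norm_nonneg A]
  set S : Set ℝ := {s | ρ ≤ s ∧ ∀ t, s ≤ t → t ≤ N → ∀ i j, 0 ≤ res A t i j} with hSdef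
  have hNS : N ∈ S := by
    refine ⟨hρN, fun t h1 h2 i j => ?_⟩
    have : t = N := le_antisymm h2 h1
    rw [this]
    exact (step_base A hA hNA).2 i j
  have hSne : S.Nonempty := ⟨N, hNS⟩
  have hbdd : BddBelow S := ⟨ρ, fun s hs => hs.1⟩
  set c := sInf S with hcdef
  have hρc : ρ ≤ c := le_csInf hSne fun s hs => hs.1
  have hcN : c ≤ N := csInf_le hbdd hNS
  have hc_gt : ∀ t, c < t → t ≤ N → ∀ i j, 0 ≤ res A t i j := by
    intro t hct htN
    obtain ⟨s, hsS, hst⟩ := exists_lt_of_csInf_lt hSne hct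
    exact hsS.2 t hst.le htN
  have hPc : ∀ i j, 0 ≤ res A c i j := by
    rcases eq_or_lt_of_le hcN with hEq | hlt
    · rw [hEq]; exact (step_base A hA hNA).2
    · intro i j
      have hcu := hunit c hρc
      have hcont : ContinuousAt (fun s : ℝ => res A s) c := by
        have hA1 : Continuous fun s : ℝ => s • (1 : Matrix (Fin n) (Fin n) ℝ) - A :=
          (continuous_id.smul continuous_const).sub continuous_const
        have := NormedRing.inverse_continuousAt hcu.unit
        rw [hcu.unit_spec] at this
        exact ContinuousAt.comp this hA1.continuousAt
      have ht : Tendsto (fun s => res A s i j) (𝓝[>] c) (𝓝 (res A c i j)) := by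
        have : Tendsto (fun s => res A s i j) (𝓝 c) (𝓝 (res A c i j)) :=
          ((entryCLM i j).continuous.continuousAt.comp hcont)
        exact this.mono_left nhdsWithin_le_nhds
      refine ge_of_tendsto ht ?_
      filter_upwards [Ioo_mem_nhdsGT_of_mem ⟨le_refl c, hlt⟩] with s hs
      exact hc_gt s hs.1 hs.2.le i j
  rcases eq_or_lt_of_le hρc with hEq | hlt
  · rw [← hEq] at hPc; exact hPc
  · exfalso
    have hcu := hunit c hρc
    set η : ℝ := min (c - ρ) ((‖res A c‖ + 1)⁻¹ / 2) with hηdef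
    have hη0 : 0 < η := by
      apply lt_min (by linarith)
      positivity
    set s0 : ℝ := c - η with hs0def
    have hs0ρ : ρ ≤ s0 := by
      have : η ≤ c - ρ := min_le_left _ _
      simp only [hs0def]; linarith
    have hs0c : s0 < c := by simp only [hs0def]; linarith
    have hs0S : s0 ∈ S := by
      refine ⟨hs0ρ, fun t h1 h2 i j => ?_⟩
      rcases le_or_gt t c with htc | htc
      · have hinv : c - (‖res A c‖ + 1)⁻¹ < t := by
          have h3 : η ≤ (‖res A c‖ + 1)⁻¹ / 2 := min_le_right _ _
          have h4 : (0:ℝ) < (‖res A c‖ + 1)⁻¹ := by positivity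
          have : s0 ≤ t := h1
          simp only [hs0def] at this
          linarith
        exact (step_ext A hcu hPc hinv htc).2 i j
      · exact hc_gt t htc h2 i j
    have := csInf_le hbdd hs0S
    rw [← hcdef] at this
    linarith

lemma not_isUnit (A : Matrix (Fin n) (Fin n) ℝ) (hA : ∀ i j, 0 ≤ A i j) {ρ : ℝ}
    (hρ : 0 ≤ ρ) (u : Fin n → ℝ) (hu0 : ∀ i, 0 ≤ u i) (hune : u ≠ 0)
    (hAu : ∀ i, ρ * u i ≤ (A *ᵥ u) i)
    (hs : ∀ s : ℝ, ρ < s → IsUnit (s • (1 : Matrix (Fin n) (Fin n) ℝ) - A)) :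
    ¬ IsUnit (ρ • (1 : Matrix (Fin n) (Fin n) ℝ) - A) := by
  intro hunit
  have hall : ∀ s : ℝ, ρ ≤ s → IsUnit (s • (1 : Matrix (Fin n) (Fin n) ℝ) - A) := by
    intro s hρs
    rcases eq_or_lt_of_le hρs with hEq | hlt
    · rw [← hEq]; exact hunit
    · exact hs s hlt
  have hP := res_nonneg_of_ge A hA hρ hall
  have hRmul : res A ρ * (ρ • (1 : Matrix (Fin n) (Fin n) ℝ) - A) = 1 :=
    Ring.inverse_mul_cancel _ hunit
  have hu : u = res A ρ *ᵥ ((ρ • (1 : Matrix (Fin n) (Fin n) ℝ) - A) *ᵥ u) := by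
    rw [Matrix.mulVec_mulVec, hRmul, Matrix.one_mulVec]
  have hw : ∀ j, ((ρ • (1 : Matrix (Fin n) (Fin n) ℝ) - A) *ᵥ u) j ≤ 0 := by
    intro j
    rw [Matrix.sub_mulVec, Matrix.smul_mulVec, Matrix.one_mulVec]
    have : ρ • u j - (A *ᵥ u) j ≤ 0 := by
      rw [smul_eq_mul]; linarith [hAu j]
    simpa using this
  have hle : ∀ i, u i ≤ 0 := by
    intro i
    have : u i = ∑ j, res A ρ i j * ((ρ • (1 : Matrix (Fin n) (Fin n) ℝ) - A) *ᵥ u) j := by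
      conv_lhs => rw [hu]
      rw [Matrix.mulVec, dotProduct]
    rw [this]
    exact Finset.sum_nonpos fun j _ => mul_nonpos_of_nonneg_of_nonpos (hP i j) (hw j)
  exact hune (funext fun i => le_antisymm (hle i) (hu0 i))


end

variable {n : ℕ}

lemma eval_charpoly {S : Type*} [CommRing S] (B : Matrix (Fin n) (Fin n) S) (z : S) :
    B.charpoly.eval z = (z • (1 : Matrix (Fin n) (Fin n) S) - B).det := by
  rw [Matrix.charpoly]
  rw [show (Matrix.charmatrix B).det.eval z = (evalRingHom z) (Matrix.charmatrix B).det from rfl]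
  rw [RingHom.map_det]
  congr 1
  ext i j
  by_cases hij : i = j
  · subst hij
    simp [Matrix.charmatrix_apply_eq, Matrix.map_apply, Matrix.sub_apply, Matrix.smul_apply,
      Matrix.one_apply]
  · simp [Matrix.charmatrix_apply_ne _ _ _ hij, hij, Matrix.map_apply, Matrix.sub_apply,
      Matrix.smul_apply, Matrix.one_apply]


end PF18

open PF18 in
/-- A matrix (`n ≥ 1`) with nonnegative off-diagonal entries has a real eigenvalue `r`
dominating the real parts of all its complex eigenvalues. -/
theorem stmt_18 {n : ℕ} (hn : 0 < n) (M : Matrix (Fin n) (Fin n) ℝ)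
    (h : ∀ i j, i ≠ j → 0 ≤ M i j) :
    ∃ r : ℝ, (Polynomial.aeval (r : ℂ)) M.charpoly = 0 ∧
      ∀ lam : ℂ, (Polynomial.aeval lam) M.charpoly = 0 → lam.re ≤ r := by
  classical
  set t : ℝ := ∑ i, |M i i| with htdef
  have ht0 : 0 ≤ t := Finset.sum_nonneg fun i _ => abs_nonneg _
  set A : Matrix (Fin n) (Fin n) ℝ := M + t • 1 with hAdef
  have hA : ∀ i j, 0 ≤ A i j := by
    intro i j
    by_cases hij : i = j
    · subst hij
      have h1 : |M i i| ≤ t :=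
        Finset.single_le_sum (fun k _ => abs_nonneg (M k k)) (Finset.mem_univ i)
      have h2 : A i i = M i i + t := by
        simp [hAdef, Matrix.add_apply, Matrix.smul_apply, Matrix.one_apply]
      rw [h2]
      linarith [neg_abs_le (M i i)]
    · have h2 : A i j = M i j := by
        simp [hAdef, Matrix.add_apply, Matrix.smul_apply, Matrix.one_apply, hij]
      rw [h2]
      exact h i j hij
  set f : ℝ →+* ℂ := algebraMap ℝ ℂ with hfdef
  have hfc : ∀ x : ℝ, f x = (x : ℂ) := fun x => rfl
  set Ac : Matrix (Fin n) (Fin n) ℂ := A.map f with hAcdef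
  set Mc : Matrix (Fin n) (Fin n) ℂ := M.map f with hMcdef
  set p : Polynomial ℂ := Ac.charpoly with hpdef
  have hpmonic : p.Monic := Matrix.charpoly_monic Ac
  have hpne : p ≠ 0 := hpmonic.ne_zero
  have hpdeg : p.natDegree = n := by
    rw [hpdef, Matrix.charpoly_natDegree_eq_dim, Fintype.card_fin]
  have hex : ∃ z : ℂ, p.IsRoot z := by
    apply IsAlgClosed.exists_root p
    rw [Polynomial.degree_eq_natDegree hpne, hpdeg]
    exact_mod_cast hn.ne'
  set F : Finset ℂ := p.roots.toFinset with hFdef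
  have hFne : F.Nonempty := by
    obtain ⟨z, hz⟩ := hex
    exact ⟨z, Multiset.mem_toFinset.mpr (Polynomial.mem_roots'.mpr ⟨hpne, hz⟩)⟩
  set G : Finset ℝ := F.image (‖·‖) with hGdef
  have hGne : G.Nonempty := hFne.image _
  set ρ : ℝ := G.max' hGne with hρdef
  have hmax : ∀ z : ℂ, p.IsRoot z → ‖z‖ ≤ ρ := fun z hz =>
    Finset.le_max' G _
      (Finset.mem_image_of_mem _ (Multiset.mem_toFinset.mpr (Polynomial.mem_roots'.mpr ⟨hpne, hz⟩)))
  obtain ⟨z0, hz0F, hz0⟩ := Finset.mem_image.mp (G.max'_mem hGne)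
  have hz0root : p.IsRoot z0 := (Polynomial.mem_roots'.mp (Multiset.mem_toFinset.mp hz0F)).2
  have hρ0 : 0 ≤ ρ := by rw [hρdef, ← hz0]; exact norm_nonneg z0
  have hdetroot : ∀ z : ℂ, p.IsRoot z ↔ (z • (1 : Matrix (Fin n) (Fin n) ℂ) - Ac).det = 0 := by
    intro z
    rw [Polynomial.IsRoot.def, hpdef, PF18.eval_charpoly]
  -- eigenvector for z0
  obtain ⟨v, hvne, hveq⟩ :=
    (Matrix.exists_mulVec_eq_zero_iff (M := z0 • (1 : Matrix (Fin n) (Fin n) ℂ) - Ac)).mpr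
      ((hdetroot z0).mp hz0root)
  have hAv : Ac *ᵥ v = z0 • v := by
    rw [Matrix.sub_mulVec, Matrix.smul_mulVec, Matrix.one_mulVec, sub_eq_zero] at hveq
    exact hveq.symm
  set u : Fin n → ℝ := fun i => ‖v i‖ with hudef
  have hu0 : ∀ i, 0 ≤ u i := fun i => norm_nonneg _
  have hune : u ≠ 0 := by
    obtain ⟨i, hi⟩ := Function.ne_iff.mp hvne
    intro h0
    apply hi
    have := congrFun h0 i
    simpa [hudef] using norm_eq_zero.mp this
  have hAu : ∀ i, ρ * u i ≤ (A *ᵥ u) i := by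
    intro i
    have h1 : (Ac *ᵥ v) i = z0 * v i := by rw [hAv]; simp
    have h2 : ‖(Ac *ᵥ v) i‖ = ρ * u i := by
      rw [h1, norm_mul, hz0, ← hρdef]
    rw [← h2]
    have h3 : (Ac *ᵥ v) i = ∑ j, Ac i j * v j := by
      rw [Matrix.mulVec, dotProduct]
    rw [h3]
    calc ‖∑ j, Ac i j * v j‖ ≤ ∑ j, ‖Ac i j * v j‖ :=
          norm_sum_le _ _
      _ = ∑ j, A i j * u j := by
          refine Finset.sum_congr rfl fun j _ => ?_
          show ‖((A i j : ℝ) : ℂ) * v j‖ = A i j * u j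
          rw [norm_mul, Complex.norm_real, Real.norm_eq_abs, abs_of_nonneg (hA i j)]
      _ = (A *ᵥ u) i := by rw [Matrix.mulVec, dotProduct]
  have hmapsub : ∀ s : ℝ, ((s • (1 : Matrix (Fin n) (Fin n) ℝ) - A).map f)
      = (s : ℂ) • (1 : Matrix (Fin n) (Fin n) ℂ) - Ac := by
    intro s
    ext i j
    by_cases hij : i = j <;>
      simp [hAcdef, Matrix.map_apply, Matrix.sub_apply, Matrix.smul_apply, Matrix.one_apply,
        hij, hfc]
  have hdetmap : ∀ s : ℝ,
      (((s • (1 : Matrix (Fin n) (Fin n) ℝ) - A).det : ℝ) : ℂ)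
        = ((s : ℂ) • (1 : Matrix (Fin n) (Fin n) ℂ) - Ac).det := by
    intro s
    rw [← hmapsub s, ← RingHom.mapMatrix_apply, ← RingHom.map_det]
    rfl
  have hs : ∀ s : ℝ, ρ < s → IsUnit (s • (1 : Matrix (Fin n) (Fin n) ℝ) - A) := by
    intro s hslt
    rw [Matrix.isUnit_iff_isUnit_det, isUnit_iff_ne_zero]
    intro hdet
    have hdc : ((s : ℂ) • (1 : Matrix (Fin n) (Fin n) ℂ) - Ac).det = 0 := by
      rw [← hdetmap s, hdet, Complex.ofReal_zero]
    have hroot : p.IsRoot (s : ℂ) := (hdetroot _).mpr hdc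
    have h5 := hmax _ hroot
    rw [Complex.norm_real, Real.norm_eq_abs] at h5
    have := le_abs_self s
    linarith
  have hnotunit := not_isUnit A hA hρ0 u hu0 hune hAu hs
  have hdetρ : (ρ • (1 : Matrix (Fin n) (Fin n) ℝ) - A).det = 0 := by
    by_contra hne
    exact hnotunit ((Matrix.isUnit_iff_isUnit_det _).mpr (isUnit_iff_ne_zero.mpr hne))
  have haev : ∀ z : ℂ, (Polynomial.aeval z) M.charpoly
      = (z • (1 : Matrix (Fin n) (Fin n) ℂ) - Mc).det := by
    intro z
    rw [Polynomial.aeval_def, Polynomial.eval₂_eq_eval_map, ← hfdef,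
      ← Matrix.charpoly_map M f, ← hMcdef, PF18.eval_charpoly]
  have hAcM : Ac = Mc + (t : ℂ) • (1 : Matrix (Fin n) (Fin n) ℂ) := by
    rw [hAcdef, hMcdef, hAdef]
    ext i j
    by_cases hij : i = j <;>
      simp [Matrix.map_apply, Matrix.add_apply, Matrix.smul_apply, Matrix.one_apply, hij, hfc]
  refine ⟨ρ - t, ?_, ?_⟩
  · rw [haev]
    have e1 : ((ρ - t : ℝ) : ℂ) • (1 : Matrix (Fin n) (Fin n) ℂ) - Mc
        = (ρ : ℂ) • (1 : Matrix (Fin n) (Fin n) ℂ) - Ac := by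
      rw [hAcM]
      ext i j
      by_cases hij : i = j <;>
        simp [Matrix.sub_apply, Matrix.add_apply, Matrix.smul_apply, Matrix.one_apply, hij] <;>
        push_cast <;> ring
    rw [e1, ← hdetmap ρ, hdetρ, Complex.ofReal_zero]
  · intro lam hlam
    rw [haev] at hlam
    have e2 : (lam + (t : ℂ)) • (1 : Matrix (Fin n) (Fin n) ℂ) - Ac
        = lam • (1 : Matrix (Fin n) (Fin n) ℂ) - Mc := by
      rw [hAcM]
      ext i j
      by_cases hij : i = j <;>
        simp [Matrix.sub_apply, Matrix.add_apply, Matrix.smul_apply, Matrix.one_apply, hij] <;>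
        ring
    have hdc : ((lam + (t : ℂ)) • (1 : Matrix (Fin n) (Fin n) ℂ) - Ac).det = 0 := by
      rw [e2]; exact hlam
    have hroot : p.IsRoot (lam + (t : ℂ)) := (hdetroot _).mpr hdc
    have h5 := hmax _ hroot
    have h6 := Complex.re_le_norm (lam + (t : ℂ))
    rw [Complex.add_re, Complex.ofReal_re] at h6
    linarith
end
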